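/- arXiv:2211.14887 — 5 statements merged into one kernel-verified Lean document; each statement's English description precedes it below -/
import Mathlib

section
/- For any integer $n \geq 3$ and $y \in (\mathbb{Z}/n\mathbb{Z})^d$, we have $-1 + \prod_{j=1}^d (1 + 2\cos(2\pi y_j/n)) = -1 - 3^{d-1}$ if and only if $n$ is even and $y$ has exactly one coordinate equal to $n/2$ and all other coordinates equal to $0$. -/
open Finset

lemma abs_prod_le {ι : Type*} (s : Finset ι) (f : ι → ℝ)
    (hf : ∀ i ∈ s, -1 ≤ f i ∧ f i ≤ 3) : |∏ i ∈ s, f i| ≤ 3 ^ s.card := by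
  rw [Finset.abs_prod]
  calc ∏ i ∈ s, |f i| ≤ ∏ i ∈ s, 3 :=
        Finset.prod_le_prod (fun i _ => abs_nonneg _)
          (fun i hi => abs_le.mpr ⟨by linarith [(hf i hi).1], (hf i hi).2⟩)
    _ = 3 ^ s.card := by rw [Finset.prod_const]

lemma prod_lb {ι : Type*} (s : Finset ι) (f : ι → ℝ) :
    (∀ i ∈ s, -1 ≤ f i ∧ f i ≤ 3) → -3 ^ (s.card - 1) ≤ ∏ i ∈ s, f i := by
  induction s using Finset.cons_induction with
  | empty => simp
  | cons a s ha ih =>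
    intro hf
    have hfa := hf a (mem_cons_self a s)
    have hf' : ∀ i ∈ s, -1 ≤ f i ∧ f i ≤ 3 := fun i hi => hf i (mem_cons_of_mem hi)
    have ih' := ih hf'
    have habs := abs_prod_le s f hf'
    rw [Finset.prod_cons, Finset.card_cons]
    simp only [Nat.add_sub_cancel]
    set P := ∏ i ∈ s, f i with hP
    rcases le_or_gt 0 (f a) with h0 | h0
    · rcases s.eq_empty_or_nonempty with rfl | hs
      · simp only [hP, Finset.prod_empty, Finset.card_empty, pow_zero, mul_one]
        linarith [hfa.1]
      · have hc : s.card - 1 + 1 = s.card := Nat.succ_pred_eq_of_pos (card_pos.mpr hs)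
        have h3 : (3:ℝ) ^ s.card = 3 * 3 ^ (s.card - 1) := by
          nth_rewrite 1 [← hc]; rw [pow_succ]; ring
        have hpow : (0:ℝ) ≤ 3 ^ (s.card - 1) := by positivity
        nlinarith [mul_nonneg h0 (by linarith : (0:ℝ) ≤ P + 3 ^ (s.card - 1)),
          mul_nonneg (by linarith [hfa.2] : (0:ℝ) ≤ 3 - f a) hpow]
    · have hPle : P ≤ 3 ^ s.card := (abs_le.mp habs).2
      nlinarith [mul_nonneg (by linarith : (0:ℝ) ≤ -f a) (by linarith : (0:ℝ) ≤ 3 ^ s.card - P),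
        mul_nonneg (by linarith [hfa.1] : (0:ℝ) ≤ 1 + f a) (by positivity : (0:ℝ) ≤ (3:ℝ) ^ s.card)]

lemma prod_eq_pow3 {ι : Type*} [DecidableEq ι] (s : Finset ι) (f : ι → ℝ)
    (hf : ∀ i ∈ s, -1 ≤ f i ∧ f i ≤ 3) (h : ∏ i ∈ s, f i = 3 ^ s.card) :
    ∀ i ∈ s, f i = 3 := by
  intro i hi
  by_contra hne
  have hlt : |f i| < 3 := by
    rcases hf i hi with ⟨h1, h2⟩
    rw [abs_lt]; constructor <;> [linarith; exact lt_of_le_of_ne h2 hne]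
  have hrw : ∏ j ∈ s, f j = f i * ∏ j ∈ s.erase i, f j := (Finset.mul_prod_erase s f hi).symm
  have habs : |∏ j ∈ s.erase i, f j| ≤ 3 ^ (s.erase i).card :=
    abs_prod_le _ f (fun j hj => hf j (mem_of_mem_erase hj))
  have hcard : (s.erase i).card = s.card - 1 := card_erase_of_mem hi
  have hc : s.card - 1 + 1 = s.card := Nat.succ_pred_eq_of_pos (card_pos.mpr ⟨i, hi⟩)
  have heq : (3:ℝ) ^ s.card = |∏ j ∈ s, f j| := by rw [h, abs_of_pos (by positivity)]
  have hlt2 : |∏ j ∈ s, f j| < 3 ^ s.card := by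
    rw [hrw, abs_mul]
    calc |f i| * |∏ j ∈ s.erase i, f j| ≤ |f i| * 3 ^ (s.erase i).card :=
          mul_le_mul_of_nonneg_left habs (abs_nonneg _)
      _ < 3 * 3 ^ (s.erase i).card := by
          have : (0:ℝ) < 3 ^ (s.erase i).card := by positivity
          exact mul_lt_mul_of_pos_right hlt this
      _ = 3 ^ s.card := by rw [hcard, ← pow_succ', hc]
  linarith

lemma prod_key {ι : Type*} [DecidableEq ι] (s : Finset ι) (f : ι → ℝ) :
    (∀ i ∈ s, -1 ≤ f i ∧ f i ≤ 3) → (∏ i ∈ s, f i = -3 ^ (s.card - 1)) → s.Nonempty →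
    ∃ r ∈ s, f r = -1 ∧ ∀ j ∈ s, j ≠ r → f j = 3 := by
  induction s using Finset.cons_induction with
  | empty => intro _ _ hs; exact absurd hs (by simp)
  | cons a s ha ih =>
    intro hf h _
    have hfa := hf a (mem_cons_self a s)
    have hf' : ∀ i ∈ s, -1 ≤ f i ∧ f i ≤ 3 := fun i hi => hf i (mem_cons_of_mem hi)
    have hlb := prod_lb s f hf'
    have habs := abs_prod_le s f hf'
    have hPle : ∏ i ∈ s, f i ≤ 3 ^ s.card := (abs_le.mp habs).2
    rw [Finset.prod_cons, Finset.card_cons, Nat.add_sub_cancel] at h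
    set P := ∏ i ∈ s, f i with hP
    have hpos : (0:ℝ) < 3 ^ s.card := by positivity
    rcases le_or_gt 0 (f a) with h0 | h0
    · rcases s.eq_empty_or_nonempty with rfl | hsn
      · simp only [hP, Finset.prod_empty, Finset.card_empty, pow_zero, mul_one] at h
        linarith
      · have hc : s.card - 1 + 1 = s.card := Nat.succ_pred_eq_of_pos (card_pos.mpr hsn)
        have h3 : (3:ℝ) ^ s.card = 3 * 3 ^ (s.card - 1) := by nth_rewrite 1 [← hc]; rw [pow_succ]; ring
        have hpow : (0:ℝ) < 3 ^ (s.card - 1) := by positivity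
        have k2 : f a = 3 := by
          nlinarith [mul_nonneg h0 (by linarith : (0:ℝ) ≤ P + 3 ^ (s.card - 1)),
            mul_nonneg (by linarith [hfa.2] : (0:ℝ) ≤ 3 - f a) hpow.le]
        have hPeq : P = -3 ^ (s.card - 1) := by
          rw [k2] at h; linarith
        obtain ⟨r, hr, hr1, hr2⟩ := ih hf' hPeq hsn
        refine ⟨r, mem_cons_of_mem hr, hr1, ?_⟩
        intro j hj hjr
        rcases mem_cons.mp hj with rfl | hjs
        · exact k2
        · exact hr2 j hjs hjr
    · have k2 : f a = -1 := by
        nlinarith [mul_nonneg (by linarith : (0:ℝ) ≤ -f a) (by linarith : (0:ℝ) ≤ 3 ^ s.card - P),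
          mul_nonneg (by linarith [hfa.1] : (0:ℝ) ≤ 1 + f a) hpos.le]
      have hPeq : P = 3 ^ s.card := by
        rw [k2] at h; linarith
      refine ⟨a, mem_cons_self a s, k2, ?_⟩
      intro j hj hja
      rcases mem_cons.mp hj with rfl | hjs
      · exact absurd rfl hja
      · exact prod_eq_pow3 s f hf' hPeq j hjs

open Real

lemma cos_one_iff' (n v : ℕ) (hn : 0 < n) (hv : v < n) :
    Real.cos (2 * π * v / n) = 1 ↔ v = 0 := by
  have hn' : (0:ℝ) < n := by exact_mod_cast hn
  have hv' : (v:ℝ) < n := by exact_mod_cast hv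
  have hx0 : (0:ℝ) ≤ 2 * π * v / n := by positivity
  have hx2 : 2 * π * v / n < 2 * π := by
    rw [div_lt_iff₀ hn']
    nlinarith [Real.pi_pos]
  constructor
  · intro h
    have h0 := (Real.cos_eq_one_iff_of_lt_of_lt (by linarith [Real.two_pi_pos]) hx2).mp h
    by_contra hvne
    have hv0 : (0:ℝ) < v := by exact_mod_cast Nat.pos_of_ne_zero hvne
    have : (0:ℝ) < 2 * π * v / n := by positivity
    linarith
  · rintro rfl
    simp

lemma cos_neg_one_iff' (n v : ℕ) (hn : 0 < n) (hv : v < n) :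
    Real.cos (2 * π * v / n) = -1 ↔ 2 * v = n := by
  have hn' : (0:ℝ) < n := by exact_mod_cast hn
  have hv' : (v:ℝ) < n := by exact_mod_cast hv
  constructor
  · intro h
    obtain ⟨k, hk⟩ := Real.cos_eq_neg_one_iff.mp h
    have hkey : (n:ℝ) * (1 + 2 * k) = 2 * v := by
      have hπ := Real.pi_ne_zero
      field_simp at hk
      nlinarith [hk, Real.pi_pos]
    have h1 : (0:ℝ) ≤ (n:ℝ) * (1 + 2 * k) := by rw [hkey]; positivity
    have h2 : (n:ℝ) * (1 + 2 * k) < 2 * n := by rw [hkey]; linarith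
    have ha : (-1:ℝ) < (k:ℝ) := by nlinarith
    have hb : (k:ℝ) < 1 := by nlinarith
    have hk0 : k = 0 := by
      have ha' : (-1:ℤ) < k := by exact_mod_cast ha
      have hb' : k < (1:ℤ) := by exact_mod_cast hb
      omega
    rw [hk0] at hkey
    push_cast at hkey
    have h3 : (2:ℝ) * v = (n:ℝ) := by linarith
    exact_mod_cast h3
  · intro h
    have hn2 : (n:ℝ) = 2 * v := by exact_mod_cast h.symm
    have hv0 : (0:ℝ) < v := by nlinarith
    have heq : 2 * π * (v:ℝ) / n = π := by
      rw [hn2]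
      field_simp
    rw [heq, Real.cos_pi]
open Finset Real in
theorem stmt_2 (n d : ℕ) [NeZero n] (hn : 3 ≤ n) (y : Fin d → ZMod n) :
    (-1 + ∏ j, (1 + 2 * Real.cos (2 * Real.pi * (y j).val / n)) : ℝ)
      = -1 - 3 ^ (d - 1) ↔
    Even n ∧ ∃ r : Fin d, y r = ((n / 2 : ℕ) : ZMod n) ∧ ∀ j, j ≠ r → y j = 0 := by
  have hn0 : 0 < n := by omega
  set f : Fin d → ℝ := fun j => 1 + 2 * Real.cos (2 * π * (y j).val / n) with hfdef
  have hf : ∀ j ∈ (univ : Finset (Fin d)), -1 ≤ f j ∧ f j ≤ 3 := by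
    intro j _
    have h1 := Real.neg_one_le_cos (2 * π * ((y j).val:ℝ) / n)
    have h2 := Real.cos_le_one (2 * π * ((y j).val:ℝ) / n)
    simp only [hfdef]
    constructor <;> linarith
  have hf3 : ∀ j, (f j = 3 ↔ y j = 0) := by
    intro j
    have hc := cos_one_iff' n (y j).val hn0 ((y j).val_lt)
    simp only [hfdef]
    rw [← ZMod.val_eq_zero, ← hc]
    constructor
    · intro h; linarith
    · intro h; rw [h]; norm_num
  have hfm1 : ∀ j, (f j = -1 ↔ 2 * (y j).val = n) := by
    intro j
    have hc := cos_neg_one_iff' n (y j).val hn0 ((y j).val_lt)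
    simp only [hfdef]
    rw [← hc]
    constructor
    · intro h; linarith
    · intro h; rw [h]; ring
  constructor
  · intro h
    have h' : ∏ j, f j = -3 ^ ((univ : Finset (Fin d)).card - 1) := by
      rw [card_univ, Fintype.card_fin]
      linarith [h]
    have hd : d ≠ 0 := by
      rintro rfl
      simp only [univ_eq_empty, prod_empty, card_empty] at h'
      norm_num at h'
    have hne : (univ : Finset (Fin d)).Nonempty := by
      have : Nonempty (Fin d) := ⟨⟨0, Nat.pos_of_ne_zero hd⟩⟩
      exact univ_nonempty
    obtain ⟨r, _, hr1, hr2⟩ := prod_key univ f hf h' hne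
    have h2v : 2 * (y r).val = n := (hfm1 r).mp hr1
    have heven : Even n := ⟨(y r).val, by omega⟩
    refine ⟨heven, r, ?_, ?_⟩
    · have : (y r).val = n / 2 := by omega
      rw [← this, ZMod.natCast_zmod_val]
    · intro j hj
      exact (hf3 j).mp (hr2 j (mem_univ j) hj)
  · rintro ⟨heven, r, hr, h0⟩
    have hnn : (0:ℝ) < n := by exact_mod_cast hn0
    have hval : (y r).val = n / 2 := by
      rw [hr, ZMod.val_cast_of_lt (by omega)]
    have hfr : f r = -1 := by
      apply (hfm1 r).mpr
      rw [hval]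
      obtain ⟨m, hm⟩ := heven
      omega
    have hrest : ∀ j ∈ (univ : Finset (Fin d)).erase r, f j = 3 := by
      intro j hj
      exact (hf3 j).mpr (h0 j (Finset.ne_of_mem_erase hj))
    have hprod : ∏ j, f j = -3 ^ (d - 1) := by
      rw [← Finset.mul_prod_erase univ f (mem_univ r), hfr,
        Finset.prod_congr rfl hrest, Finset.prod_const,
        Finset.card_erase_of_mem (mem_univ r), card_univ, Fintype.card_fin]
      ring
    linarith [hprod]
end

section
/- Let $f : (\mathbb{Z}/n\mathbb{Z})^d \to \{-1, 1\}$ and let $M$ be the adjacency matrix of the Cayley graph of $(\mathbb{Z}/n\mathbb{Z})^d$ with connection set $\{-1,0,1\}^d \setminus \{0\}$. Then $f^T M f = \sum_{x} \sum_{v \in \{-1,0,1\}^d\setminus\{0\}} f(x) f(x+v) \geq (-1 - 3^{d-1}) n^d$, provided $n \geq 3$. -/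
open Finset Fintype Matrix

/-!
With `S_a f = f (· + a)` and `T_a = S_a + 1 + S_{-a}`, the matrix `M + 1` acts as the product of
the commuting operators `T_{e_j}` over the coordinate directions. Each `T_a` has spectrum in
`[-1, 3]`, so the product has spectrum in `[-3^(d-1), 3^d]`. This is proved by induction without
spectral theory: for `Q` commuting with `S_a`, put `E = f + S_a f` and `F = f - S_a f`; then
`4 ⟨f, T_a Q f⟩ = 3 ⟨E, Q E⟩ - ⟨F, Q F⟩` and `‖E‖² + ‖F‖² = 4 ‖f‖²`, so the bounds
`-c ≤ Q ≤ 3c` on the quadratic form pass to `-3c ≤ T_a Q ≤ 9c`. For `f` with values `±1`,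
`‖f‖² = n^d`.
-/

section SignValues

variable {R : Type*} [Ring R]

lemma SignType.cast_injective_of_one_ne_neg_one (h : (1 : R) ≠ -1) :
    Function.Injective (SignType.cast : SignType → R) := by
  have h₁ : (1 : R) ≠ 0 := fun h₀ => h (by rw [h₀, neg_zero])
  have h₂ : (-1 : R) ≠ 0 := neg_ne_zero.2 h₁
  intro s t hst
  cases s <;> cases t <;> simp_all [SignType.cast, eq_comm]

variable [DecidableEq R]

lemma SignType.univ_image_cast :
    (univ : Finset SignType).image SignType.cast = ({0, 1, -1} : Finset R) := by
  rw [SignType.univ_eq]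
  simp [image_insert, pair_comm]

lemma piFinset_zero_one_neg_one_eq_image {ι : Type*} [Fintype ι] [DecidableEq ι] :
    piFinset (fun _ : ι => ({0, 1, -1} : Finset R)) =
      (univ : Finset (ι → SignType)).image fun c k => (c k : R) := by
  rw [← SignType.univ_image_cast, piFinset_image, Fintype.piFinset_univ]

end SignValues

namespace CayleyCube

section Translations

variable {G : Type*} [AddCommGroup G]

def shift (a : G) : Module.End ℝ (G → ℝ) := LinearMap.funLeft ℝ ℝ (· + a)

@[simp] lemma shift_apply (a : G) (f : G → ℝ) (x : G) : shift a f x = f (x + a) := rfl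

@[simp] lemma shift_zero : shift (0 : G) = 1 := by
  ext f x
  simp

lemma shift_add (a b : G) : shift (a + b) = shift a * shift b := by
  ext f x
  simp [add_assoc]

lemma commute_shift (a b : G) : Commute (shift a) (shift b) := by
  rw [Commute, SemiconjBy, ← shift_add, ← shift_add, add_comm]

def nbhdOp (a : G) : Module.End ℝ (G → ℝ) := shift a + 1 + shift (-a)

lemma commute_nbhdOp_shift (a b : G) : Commute (nbhdOp a) (shift b) :=
  ((commute_shift a b).add_left (Commute.one_left _)).add_left (commute_shift (-a) b)

lemma nbhdOp_eq_sum (a : G) : nbhdOp a = ∑ t : SignType, shift ((t : ℤ) • a) := by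
  rw [SignType.univ_eq, sum_insert (by decide), sum_pair (by decide)]
  ext f x
  simp only [nbhdOp, LinearMap.add_apply, Module.End.one_apply, Pi.add_apply, shift_apply,
    SignType.coe_zero, zero_smul, shift_zero, SignType.coe_neg, SignType.coe_one, neg_smul,
    one_smul]
  ring

lemma prod_map_nbhdOp_ofFn {m : ℕ} (e : Fin m → G) :
    ((List.ofFn e).map nbhdOp).prod = ∑ c : Fin m → SignType, shift (∑ i, (c i : ℤ) • e i) := by
  induction m with
  | zero =>
    ext f x
    simp
  | succ m ih =>
    rw [List.ofFn_succ, List.map_cons, List.prod_cons, ih, nbhdOp_eq_sum, Fintype.sum_mul_sum,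
      ← (Fin.consEquiv fun _ => SignType).sum_comp, Fintype.sum_prod_type]
    simp [Fin.consEquiv, Fin.sum_univ_succ, shift_add]

lemma prod_map_nbhdOp_single_apply {R : Type*} [Ring R] [DecidableEq R] (h : (1 : R) ≠ -1)
    {d : ℕ} (f : (Fin d → R) → ℝ) (x : Fin d → R) :
    ((List.ofFn fun j => Pi.single j (1 : R)).map nbhdOp).prod f x =
      ∑ v ∈ piFinset (fun _ => ({0, 1, -1} : Finset R)), f (x + v) := by
  have hinj : Function.Injective fun (c : Fin d → SignType) k => (c k : R) :=
    (SignType.cast_injective_of_one_ne_neg_one h).comp_left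
  rw [prod_map_nbhdOp_ofFn, piFinset_zero_one_neg_one_eq_image,
    sum_image fun c _ c' _ hc => hinj hc]
  simp only [LinearMap.sum_apply, Finset.sum_apply, shift_apply]
  refine Fintype.sum_congr _ _ fun c => congrArg (fun v => f (x + v)) ?_
  ext k
  simp only [Finset.sum_apply, Pi.smul_apply, Pi.single_apply, smul_ite, smul_zero, zsmul_one,
    SignType.intCast_cast, Fintype.sum_ite_eq]

end Translations

section QuadraticForm

variable {G : Type*} [AddCommGroup G] [Fintype G]

lemma shift_dotProduct_shift (a : G) (g h : G → ℝ) : shift a g ⬝ᵥ shift a h = g ⬝ᵥ h :=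
  Fintype.sum_equiv (Equiv.addRight a) _ _ fun _ => rfl

lemma shift_dotProduct (a : G) (g h : G → ℝ) : shift a g ⬝ᵥ h = g ⬝ᵥ shift (-a) h := by
  rw [← shift_dotProduct_shift (-a), ← Module.End.mul_apply, ← shift_add, neg_add_cancel,
    shift_zero, Module.End.one_apply]

def QuadFormBounds (Q : Module.End ℝ (G → ℝ)) (lo hi : ℝ) : Prop :=
  ∀ f, lo * (f ⬝ᵥ f) ≤ f ⬝ᵥ Q f ∧ f ⬝ᵥ Q f ≤ hi * (f ⬝ᵥ f)

lemma four_mul_dotProduct_nbhdOp_mul {Q : Module.End ℝ (G → ℝ)} {a : G}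
    (hQ : Commute Q (shift a)) (f : G → ℝ) :
    4 * (f ⬝ᵥ (nbhdOp a * Q) f) = 3 * ((f + shift a f) ⬝ᵥ Q (f + shift a f))
      - (f - shift a f) ⬝ᵥ Q (f - shift a f) := by
  have hcomm : Q (shift a f) = shift a (Q f) := LinearMap.congr_fun hQ.eq f
  have hsym : shift a f ⬝ᵥ shift a (Q f) = f ⬝ᵥ Q f := shift_dotProduct_shift a f (Q f)
  have hadj : shift a f ⬝ᵥ Q f = f ⬝ᵥ shift (-a) (Q f) := shift_dotProduct a f (Q f)
  simp only [nbhdOp, Module.End.mul_apply, LinearMap.add_apply, Module.End.one_apply, map_add,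
    map_sub, add_dotProduct, dotProduct_add, sub_dotProduct, dotProduct_sub, hcomm] at *
  linarith

lemma dotProduct_add_shift_add_sub (a : G) (f : G → ℝ) :
    (f + shift a f) ⬝ᵥ (f + shift a f) + (f - shift a f) ⬝ᵥ (f - shift a f) = 4 * (f ⬝ᵥ f) := by
  have := shift_dotProduct_shift a f f
  simp only [add_dotProduct, dotProduct_add, sub_dotProduct, dotProduct_sub,
    dotProduct_comm (shift a f) f] at *
  linarith

lemma QuadFormBounds.nbhdOp_mul {Q : Module.End ℝ (G → ℝ)} {a : G} {c : ℝ}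
    (hQ : QuadFormBounds Q (-c) (3 * c)) (hcomm : Commute Q (shift a)) :
    QuadFormBounds (nbhdOp a * Q) (-(3 * c)) (3 * (3 * c)) := by
  intro f
  have hid := four_mul_dotProduct_nbhdOp_mul hcomm f
  have hnorm := congrArg (c * ·) (dotProduct_add_shift_add_sub a f)
  obtain ⟨hE₁, hE₂⟩ := hQ (f + shift a f)
  obtain ⟨hF₁, hF₂⟩ := hQ (f - shift a f)
  constructor <;> linarith

theorem quadFormBounds_prod_nbhdOp (L : List G) :
    QuadFormBounds (L.map nbhdOp).prod (-(3 ^ L.length / 3)) (3 ^ L.length) := by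
  induction L with
  | nil =>
    intro f
    have := dotProduct_self_star_nonneg f
    simp only [star_trivial, List.map_nil, List.prod_nil, List.length_nil, Module.End.one_apply,
      pow_zero] at *
    constructor <;> linarith
  | cons a L ih =>
    have hcomm : Commute (L.map nbhdOp).prod (shift a) :=
      Commute.list_prod_left _ _ fun b hb => by
        obtain ⟨b, -, rfl⟩ := List.mem_map.1 hb
        exact commute_nbhdOp_shift b a
    rw [List.map_cons, List.prod_cons, List.length_cons]
    convert QuadFormBounds.nbhdOp_mul (c := 3 ^ L.length / 3) (by convert ih using 2; ring) hcomm
      using 2 <;> ring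

end QuadraticForm

end CayleyCube

open CayleyCube

theorem stmt_5 (n d : ℕ) [NeZero n] (hn : 3 ≤ n)
    (f : (Fin d → ZMod n) → ℝ) (hf : ∀ x, f x = 1 ∨ f x = -1) :
    ((-1 - 3 ^ (d - 1) : ℝ)) * n ^ d ≤
      ∑ x : Fin d → ZMod n,
        ∑ v ∈ Finset.univ.filter
            (fun v : Fin d → ZMod n => (∀ j, v j = 0 ∨ v j = 1 ∨ v j = -1) ∧ v ≠ 0),
          f x * f (x + v) := by
  have : Fact (2 < n) := ⟨hn⟩
  set L := List.ofFn fun j : Fin d => (Pi.single j 1 : Fin d → ZMod n)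
  set P := (L.map nbhdOp).prod
  have hcube : ∀ x, ∑ v ∈ univ.filter
      (fun v : Fin d → ZMod n => (∀ j, v j = 0 ∨ v j = 1 ∨ v j = -1) ∧ v ≠ 0), f x * f (x + v) =
        f x * P f x - f x * f x := by
    intro x
    rw [show univ.filter _ = (piFinset fun _ => ({0, 1, -1} : Finset (ZMod n))).erase 0 by
        ext v; simp [and_comm],
      ← mul_sum, sum_erase_eq_sub (by simp),
      ← prod_map_nbhdOp_single_apply ZMod.neg_one_ne_one.symm, add_zero, mul_sub]
  have hnorm : f ⬝ᵥ f = n ^ d := by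
    have hsq : ∀ x, f x * f x = 1 := fun x => by rcases hf x with h | h <;> simp [h]
    simp [dotProduct, hsq, ZMod.card]
  have hbound := (quadFormBounds_prod_nbhdOp L f).1
  rw [List.length_ofFn, hnorm] at hbound
  have h3 : (3 : ℝ) ^ d / 3 ≤ 3 ^ (d - 1) := by
    rw [div_le_iff₀ three_pos, ← pow_succ]
    exact pow_le_pow_right₀ (by norm_num) (by omega)
  have hpow := mul_le_mul_of_nonneg_right h3 (by positivity : (0 : ℝ) ≤ n ^ d)
  rw [sum_congr rfl fun x _ => hcube x, sum_sub_distrib]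
  change _ ≤ f ⬝ᵥ P f - f ⬝ᵥ f
  linarith
end

section
/- Let $n \geq 3$ and let $f : (\mathbb{Z}/n\mathbb{Z})^d \to \{-1,1\}$ satisfy $\sum_{x} \sum_{v \in \{-1,0,1\}^d\setminus\{0\}} f(x) f(x+v) = (-1 - 3^{d-1}) n^d$. Then $n$ is even and there exist a coordinate index $r \in \{1,\ldots,d\}$ and $\epsilon \in \{0,1\}$ such that $f(x_1,\ldots,x_d) = 1$ exactly when $x_r \equiv \epsilon \pmod 2$. -/
open Finset

variable {n d : ℕ}

def bv (n : ℕ) {d : ℕ} (b : Fin d → Bool) : Fin d → ZMod n := fun j => if b j then 1 else 0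

noncomputable def sg {d : ℕ} (T : Finset (Fin d)) (b : Fin d → Bool) : ℝ :=
  ∏ j ∈ T, (if b j then (-1 : ℝ) else 1)

noncomputable def cT (d : ℕ) (T : Finset (Fin d)) : ℝ :=
  3 ^ (d - 1) + (-1) ^ T.card * 3 ^ (d - T.card)

lemma sum_powerset_prod (g : Fin d → ℝ) :
    ∑ T ∈ (univ : Finset (Fin d)).powerset, ∏ j ∈ T, g j = ∏ j, (g j + 1) := by
  rw [Finset.prod_add]
  simp

lemma orth (u b : Fin d → Bool) :
    ∑ T ∈ (univ : Finset (Fin d)).powerset, sg T u * sg T b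
      = if u = b then (2:ℝ)^d else 0 := by
  have h1 : ∀ T ∈ (univ : Finset (Fin d)).powerset, sg T u * sg T b
      = ∏ j ∈ T, ((if u j then (-1:ℝ) else 1) * (if b j then (-1:ℝ) else 1)) := by
    intro T _; rw [sg, sg, ← Finset.prod_mul_distrib]
  rw [Finset.sum_congr rfl h1, sum_powerset_prod]
  by_cases h : u = b
  · subst h
    simp only [if_pos rfl]
    have : ∀ j, (if u j then (-1:ℝ) else 1) * (if u j then (-1:ℝ) else 1) + 1 = 2 := by
      intro j; by_cases hj : u j <;> simp [hj] <;> norm_num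
    rw [Finset.prod_congr rfl (fun j _ => this j)]
    simp
  · rw [if_neg h]
    obtain ⟨j, hj⟩ : ∃ j, u j ≠ b j := by
      by_contra hc; push_neg at hc; exact h (funext hc)
    apply Finset.prod_eq_zero (Finset.mem_univ j)
    rcases Bool.eq_false_or_eq_true (u j) with h1 | h1 <;>
      rcases Bool.eq_false_or_eq_true (b j) with h2 | h2 <;>
      simp [h1, h2] at hj ⊢

lemma kernel (u b : Fin d → Bool) :
    ∑ T ∈ (univ : Finset (Fin d)).powerset, cT d T * (sg T u * sg T b)
      = 3^(d-1) * (if u = b then (2:ℝ)^d else 0)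
        + ∏ j, (if u j = b j then (2:ℝ) else 4) := by
  have key : ∀ T ∈ (univ : Finset (Fin d)).powerset, cT d T * (sg T u * sg T b)
      = 3^(d-1) * (sg T u * sg T b)
        + (∏ j ∈ T, -((if u j then (-1:ℝ) else 1) * (if b j then (-1:ℝ) else 1)))
          * ∏ j ∈ (univ : Finset (Fin d)) \ T, (3:ℝ) := by
    intro T hT
    have hsub : T ⊆ univ := Finset.mem_powerset.mp hT
    have hcard : ((univ : Finset (Fin d)) \ T).card = d - T.card := by
      rw [Finset.card_sdiff_of_subset hsub, Finset.card_univ, Fintype.card_fin]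
    have h2 : (∏ j ∈ T, -((if u j then (-1:ℝ) else 1) * (if b j then (-1:ℝ) else 1)))
        = (-1:ℝ)^T.card * (sg T u * sg T b) := by
      rw [sg, sg, ← Finset.prod_mul_distrib]
      rw [show (fun j => -((if u j then (-1:ℝ) else 1) * (if b j then (-1:ℝ) else 1)))
        = fun j => (-1) * ((if u j then (-1:ℝ) else 1) * (if b j then (-1:ℝ) else 1)) by
          funext j; ring]
      rw [Finset.prod_mul_distrib, Finset.prod_const]
    rw [h2, Finset.prod_const, hcard, cT]
    ring
  rw [Finset.sum_congr rfl key, Finset.sum_add_distrib, ← Finset.mul_sum, orth]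
  congr 1
  rw [← Finset.prod_add]
  apply Finset.prod_congr rfl
  intro j _
  rcases Bool.eq_false_or_eq_true (u j) with h1 | h1 <;>
    rcases Bool.eq_false_or_eq_true (b j) with h2 | h2 <;> simp [h1, h2] <;> norm_num

def cube (n d : ℕ) [NeZero n] : Finset (Fin d → ZMod n) :=
  univ.filter fun v => ∀ j, v j = 0 ∨ v j = 1 ∨ v j = -1

lemma coord_sum (h1 : (1:ZMod n) ≠ 0) (h3 : (1:ZMod n) ≠ -1) (c : ZMod n)
    (hc : c = 0 ∨ c = 1 ∨ c = -1) :
    ∑ s ∈ (univ : Finset (Bool × Bool)).filter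
        (fun s => (if s.1 then (1:ZMod n) else 0) - (if s.2 then 1 else 0) = c),
      (if s.1 = s.2 then (2:ℝ) else 4) = 4 := by
  have h2 : (-1:ZMod n) ≠ 0 := by
    intro h; exact h1 (by rw [← neg_neg (1:ZMod n), h, neg_zero])
  have h4 : (0:ZMod n) ≠ 1 := fun h => h1 h.symm
  have h5 : (0:ZMod n) ≠ -1 := fun h => h2 h.symm
  have h6 : (-1:ZMod n) ≠ 1 := fun h => h3 h.symm
  rw [Finset.sum_filter, Fintype.sum_prod_type]
  rw [Fintype.sum_bool]
  simp only [Fintype.sum_bool, if_true, if_false, sub_zero, zero_sub, sub_self]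
  rcases hc with h | h | h <;> subst h <;>
    simp [h1, h2, h4, h5, h6, h3] <;> norm_num

lemma fiber_weight [NeZero n] (h1 : (1:ZMod n) ≠ 0) (h3 : (1:ZMod n) ≠ -1)
    (v : Fin d → ZMod n) (hv : ∀ j, v j = 0 ∨ v j = 1 ∨ v j = -1) :
    ∑ p ∈ (univ : Finset ((Fin d → Bool) × (Fin d → Bool))).filter
        (fun p => bv n p.1 - bv n p.2 = v),
      ∏ j, (if p.1 j = p.2 j then (2:ℝ) else 4) = 4 ^ d := by
  classical
  set t : Fin d → Finset (Bool × Bool) := fun j =>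
    (univ : Finset (Bool × Bool)).filter
      (fun s => (if s.1 then (1:ZMod n) else 0) - (if s.2 then 1 else 0) = v j) with ht
  have step1 : ∑ p ∈ (univ : Finset ((Fin d → Bool) × (Fin d → Bool))).filter
        (fun p => bv n p.1 - bv n p.2 = v),
      ∏ j, (if p.1 j = p.2 j then (2:ℝ) else 4)
      = ∑ q ∈ Fintype.piFinset t, ∏ j, (if (q j).1 = (q j).2 then (2:ℝ) else 4) := by
    apply Finset.sum_nbij' (i := fun p => fun j => (p.1 j, p.2 j))
      (j := fun q => (fun j => (q j).1, fun j => (q j).2))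
    · intro p hp
      rw [Finset.mem_filter] at hp
      rw [Fintype.mem_piFinset]
      intro j
      rw [ht]
      simp only [Finset.mem_filter, Finset.mem_univ, true_and]
      have := congrFun hp.2 j
      simpa [bv] using this
    · intro q hq
      rw [Fintype.mem_piFinset] at hq
      rw [Finset.mem_filter]
      refine ⟨Finset.mem_univ _, ?_⟩
      funext j
      have := hq j
      rw [ht] at this
      simp only [Finset.mem_filter, Finset.mem_univ, true_and] at this
      simpa [bv] using this
    · intro p _; rfl
    · intro q _; rfl
    · intro p _; rfl
  rw [step1]
  have h7 := Finset.prod_univ_sum t (fun (_ : Fin d) (s : Bool × Bool) =>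
    if s.1 = s.2 then (2:ℝ) else 4)
  rw [← h7]
  have : ∀ j, (∑ s ∈ t j, (if s.1 = s.2 then (2:ℝ) else 4)) = 4 := fun j =>
    coord_sum h1 h3 (v j) (hv j)
  rw [Finset.prod_congr rfl (fun j _ => this j), Finset.prod_const]
  simp

lemma pair_sum [NeZero n] (h1 : (1:ZMod n) ≠ 0) (h3 : (1:ZMod n) ≠ -1)
    (g : (Fin d → ZMod n) → ℝ) :
    ∑ p : (Fin d → Bool) × (Fin d → Bool),
      (∏ j, if p.1 j = p.2 j then (2:ℝ) else 4) * g (bv n p.1 - bv n p.2)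
      = 4 ^ d * ∑ v ∈ cube n d, g v := by
  classical
  have hmaps : ∀ p ∈ (univ : Finset ((Fin d → Bool) × (Fin d → Bool))),
      bv n p.1 - bv n p.2 ∈ cube n d := by
    intro p _
    rw [cube, Finset.mem_filter]
    refine ⟨Finset.mem_univ _, fun j => ?_⟩
    rcases Bool.eq_false_or_eq_true (p.1 j) with ha | ha <;>
      rcases Bool.eq_false_or_eq_true (p.2 j) with hb | hb <;>
      simp [bv, Pi.sub_apply, ha, hb]
  rw [← Finset.sum_fiberwise_of_maps_to hmaps
    (fun p => (∏ j, if p.1 j = p.2 j then (2:ℝ) else 4) * g (bv n p.1 - bv n p.2))]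
  rw [Finset.mul_sum]
  apply Finset.sum_congr rfl
  intro v hv
  rw [cube, Finset.mem_filter] at hv
  have : ∀ p ∈ (univ : Finset ((Fin d → Bool) × (Fin d → Bool))).filter
      (fun p => bv n p.1 - bv n p.2 = v),
      (∏ j, if p.1 j = p.2 j then (2:ℝ) else 4) * g (bv n p.1 - bv n p.2)
      = (∏ j, if p.1 j = p.2 j then (2:ℝ) else 4) * g v := by
    intro p hp
    rw [Finset.mem_filter] at hp
    rw [hp.2]
  rw [Finset.sum_congr rfl this, ← Finset.sum_mul, fiber_weight h1 h3 v hv.2]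

noncomputable def Dop {n d : ℕ} (f : (Fin d → ZMod n) → ℝ) (T : Finset (Fin d))
    (x : Fin d → ZMod n) : ℝ :=
  ∑ b : Fin d → Bool, sg T b * f (x + bv n b)

lemma sos [NeZero n] (h1 : (1:ZMod n) ≠ 0) (h3 : (1:ZMod n) ≠ -1)
    (f : (Fin d → ZMod n) → ℝ) :
    ∑ T ∈ (univ : Finset (Fin d)).powerset, cT d T * ∑ x, (Dop f T x)^2
      = 4^d * 3^(d-1) * (∑ x, (f x)^2)
        + 4^d * ∑ x, f x * ∑ v ∈ cube n d, f (x + v) := by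
  classical
  set S : (Fin d → Bool) → (Fin d → Bool) → ℝ :=
    fun b b' => ∑ x, f (x + (bv n b - bv n b')) * f x with hS
  have hshift : ∀ a c : Fin d → ZMod n,
      ∑ x, f (x + a) * f (x + c) = ∑ x, f (x + (a - c)) * f x := by
    intro a c
    apply Fintype.sum_equiv (Equiv.addRight c)
    intro x
    simp only [Equiv.coe_addRight]
    have hx : x + a = x + c + (a - c) := by abel
    rw [hx]
  have expand : ∀ T ∈ (univ : Finset (Fin d)).powerset,
      cT d T * ∑ x, (Dop f T x)^2
      = ∑ p : (Fin d → Bool) × (Fin d → Bool),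
          cT d T * ((sg T p.1 * sg T p.2) * S p.1 p.2) := by
    intro T _
    rw [← Finset.mul_sum]
    congr 1
    calc ∑ x, (Dop f T x)^2
        = ∑ x, ∑ b : Fin d → Bool, ∑ b' : Fin d → Bool,
            (sg T b * f (x + bv n b)) * (sg T b' * f (x + bv n b')) := by
          apply Finset.sum_congr rfl; intro x _
          rw [sq, Dop, Finset.sum_mul_sum]
      _ = ∑ b : Fin d → Bool, ∑ b' : Fin d → Bool, ∑ x,
            (sg T b * f (x + bv n b)) * (sg T b' * f (x + bv n b')) := by
          rw [Finset.sum_comm]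
          apply Finset.sum_congr rfl; intro b _
          rw [Finset.sum_comm]
      _ = ∑ b : Fin d → Bool, ∑ b' : Fin d → Bool, (sg T b * sg T b') * S b b' := by
          apply Finset.sum_congr rfl; intro b _
          apply Finset.sum_congr rfl; intro b' _
          simp only [hS]
          rw [← hshift (bv n b) (bv n b'), Finset.mul_sum]
          apply Finset.sum_congr rfl; intro x _
          ring
      _ = ∑ p : (Fin d → Bool) × (Fin d → Bool), (sg T p.1 * sg T p.2) * S p.1 p.2 := by
          rw [Fintype.sum_prod_type]
  rw [Finset.sum_congr rfl expand, Finset.sum_comm]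
  have kern : ∀ p : (Fin d → Bool) × (Fin d → Bool),
      ∑ T ∈ (univ : Finset (Fin d)).powerset, cT d T * ((sg T p.1 * sg T p.2) * S p.1 p.2)
      = (3^(d-1) * (if p.1 = p.2 then (2:ℝ)^d else 0)) * S p.1 p.2
        + (∏ j, (if p.1 j = p.2 j then (2:ℝ) else 4)) * S p.1 p.2 := by
    intro p
    have : ∀ T ∈ (univ : Finset (Fin d)).powerset,
        cT d T * ((sg T p.1 * sg T p.2) * S p.1 p.2)
        = (cT d T * (sg T p.1 * sg T p.2)) * S p.1 p.2 := by
      intro T _; ring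
    rw [Finset.sum_congr rfl this, ← Finset.sum_mul, kernel, add_mul]
  rw [Finset.sum_congr rfl (fun p _ => kern p), Finset.sum_add_distrib]
  congr 1
  · -- diagonal part
    rw [Fintype.sum_prod_type]
    have hb : ∀ b : Fin d → Bool,
        ∑ b' : Fin d → Bool, (3^(d-1) * (if b = b' then (2:ℝ)^d else 0)) * S b b'
        = (3:ℝ)^(d-1) * 2^d * S b b := by
      intro b
      have h' : ∀ b' : Fin d → Bool,
          (3^(d-1) * (if b = b' then (2:ℝ)^d else 0)) * S b b'
          = if b = b' then ((3:ℝ)^(d-1) * 2^d * S b b') else 0 := by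
        intro b'; split_ifs with h
        · ring
        · simp
      rw [Finset.sum_congr rfl (fun b' _ => h' b'), Finset.sum_ite_eq]
      simp
    rw [Finset.sum_congr rfl (fun b _ => hb b)]
    have hSbb : ∀ b : Fin d → Bool, S b b = ∑ x, (f x)^2 := by
      intro b; rw [hS]
      apply Finset.sum_congr rfl; intro x _
      rw [sub_self, add_zero, sq]
    have : ∀ b : Fin d → Bool, (3:ℝ)^(d-1) * 2^d * S b b
        = (3:ℝ)^(d-1) * 2^d * ∑ x, (f x)^2 := fun b => by rw [hSbb b]
    rw [Finset.sum_congr rfl (fun b _ => this b), Finset.sum_const, Finset.card_univ]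
    have hcard : Fintype.card (Fin d → Bool) = 2^d := by
      simp [Fintype.card_fun]
    rw [hcard, nsmul_eq_mul]
    push_cast
    have h4 : (4:ℝ)^d = 2^d * 2^d := by rw [← mul_pow]; norm_num
    rw [h4]; ring
  · -- product part
    have step : ∀ p : (Fin d → Bool) × (Fin d → Bool),
        (∏ j, (if p.1 j = p.2 j then (2:ℝ) else 4)) * S p.1 p.2
        = ∑ x, (∏ j, (if p.1 j = p.2 j then (2:ℝ) else 4))
            * (f (x + (bv n p.1 - bv n p.2)) * f x) := by
      intro p; rw [hS, Finset.mul_sum]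
    rw [Finset.sum_congr rfl (fun p _ => step p), Finset.sum_comm]
    rw [Finset.mul_sum]
    apply Finset.sum_congr rfl
    intro x _
    have : ∀ p : (Fin d → Bool) × (Fin d → Bool),
        (∏ j, (if p.1 j = p.2 j then (2:ℝ) else 4)) * (f (x + (bv n p.1 - bv n p.2)) * f x)
        = ((∏ j, (if p.1 j = p.2 j then (2:ℝ) else 4)) * f (x + (bv n p.1 - bv n p.2))) * f x := by
      intro p; ring
    rw [Finset.sum_congr rfl (fun p _ => this p), ← Finset.sum_mul]
    rw [pair_sum h1 h3 (fun w => f (x + w))]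
    ring

lemma cT_nonneg (T : Finset (Fin d)) : 0 ≤ cT d T := by
  have hk : T.card ≤ d := by
    have := Finset.card_le_univ T
    simpa using this
  rw [cT]
  rcases Nat.even_or_odd T.card with h | h
  · rw [h.neg_one_pow]
    positivity
  · rw [h.neg_one_pow]
    have : (3:ℝ)^(d - T.card) ≤ 3^(d-1) := by
      apply pow_le_pow_right₀ (by norm_num)
      have := h.pos
      omega
    nlinarith
lemma cT_pos (T : Finset (Fin d)) (hT : T.card ≠ 1) : 0 < cT d T := by
  have hk : T.card ≤ d := by
    have := Finset.card_le_univ T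
    simpa using this
  rw [cT]
  rcases Nat.even_or_odd T.card with h | h
  · rw [h.neg_one_pow]
    positivity
  · rw [h.neg_one_pow]
    have h3 : 3 ≤ T.card := by
      obtain ⟨k, hk2⟩ := h
      omega
    have : (3:ℝ)^(d - T.card) < 3^(d-1) := by
      apply pow_lt_pow_right₀ (by norm_num)
      omega
    nlinarith

lemma inv_lemma [NeZero n] (f : (Fin d → ZMod n) → ℝ) (x : Fin d → ZMod n)
    (u : Fin d → Bool) :
    ∑ T ∈ (univ : Finset (Fin d)).powerset, sg T u * Dop f T x
      = 2^d * f (x + bv n u) := by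
  classical
  have expand : ∀ T ∈ (univ : Finset (Fin d)).powerset,
      sg T u * Dop f T x = ∑ b : Fin d → Bool, (sg T u * sg T b) * f (x + bv n b) := by
    intro T _
    rw [Dop, Finset.mul_sum]
    apply Finset.sum_congr rfl; intro b _; ring
  rw [Finset.sum_congr rfl expand, Finset.sum_comm]
  have : ∀ b : Fin d → Bool,
      ∑ T ∈ (univ : Finset (Fin d)).powerset, (sg T u * sg T b) * f (x + bv n b)
      = (if u = b then (2:ℝ)^d else 0) * f (x + bv n b) := by
    intro b; rw [← Finset.sum_mul, orth]
  rw [Finset.sum_congr rfl (fun b _ => this b)]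
  have : ∀ b : Fin d → Bool,
      (if u = b then (2:ℝ)^d else 0) * f (x + bv n b)
      = if u = b then (2:ℝ)^d * f (x + bv n b) else 0 := by
    intro b; split_ifs <;> simp
  rw [Finset.sum_congr rfl (fun b _ => this b), Finset.sum_ite_eq]
  simp

lemma singl_sum (g : Finset (Fin d) → ℝ)
    (hg : ∀ T ∈ (univ : Finset (Fin d)).powerset, T.card ≠ 1 → g T = 0) :
    ∑ T ∈ (univ : Finset (Fin d)).powerset, g T = ∑ r : Fin d, g {r} := by
  classical
  rw [← Finset.sum_filter_add_sum_filter_not ((univ : Finset (Fin d)).powerset)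
    (fun T => T.card = 1)]
  have h2 : ∑ T ∈ ((univ : Finset (Fin d)).powerset).filter (fun T => ¬ T.card = 1), g T
      = 0 := by
    apply Finset.sum_eq_zero
    intro T hT
    rw [Finset.mem_filter] at hT
    exact hg T hT.1 hT.2
  rw [h2, add_zero]
  have h3 : ((univ : Finset (Fin d)).powerset).filter (fun T => T.card = 1)
      = Finset.univ.image (fun r : Fin d => ({r} : Finset (Fin d))) := by
    ext T
    simp only [Finset.mem_filter, Finset.mem_powerset, Finset.mem_image, Finset.mem_univ,
      true_and, Finset.subset_univ, Finset.card_eq_one]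
    constructor
    · rintro ⟨a, ha⟩; exact ⟨a, ha.symm⟩
    · rintro ⟨a, ha⟩; exact ⟨a, ha.symm⟩
  rw [h3, Finset.sum_image]
  intro a _ b _ h
  exact Finset.singleton_injective h

lemma local_struct [NeZero n] (f : (Fin d → ZMod n) → ℝ)
    (hf : ∀ x, f x = 1 ∨ f x = -1)
    (vanish : ∀ T ∈ (univ : Finset (Fin d)).powerset, T.card ≠ 1 →
      ∀ y, Dop f T y = 0)
    (x : Fin d → ZMod n) :
    ∃ r : Fin d, ∀ u : Fin d → Bool,
      f (x + bv n u) = (if u r then -1 else 1) * f x := by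
  classical
  set c : Fin d → ℝ := fun r => Dop f {r} x with hc
  have key : ∀ u : Fin d → Bool,
      (2:ℝ)^d * f (x + bv n u) = ∑ r : Fin d, (if u r then (-1:ℝ) else 1) * c r := by
    intro u
    rw [← inv_lemma f x u]
    rw [singl_sum (fun T => sg T u * Dop f T x)
      (fun T hT h1 => by show sg T u * Dop f T x = 0; rw [vanish T hT h1 x, mul_zero])]
    apply Finset.sum_congr rfl
    intro r _
    rw [hc, sg, Finset.prod_singleton]
  have hbv0 : bv n (fun _ : Fin d => false) = 0 := by
    funext j; simp [bv]
  have keyA : (2:ℝ)^d * f x = ∑ r : Fin d, c r := by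
    have := key (fun _ => false)
    rw [hbv0, add_zero] at this
    simpa using this
  have keyB : ∀ r : Fin d, (2:ℝ)^d * f (x + bv n (fun i => decide (i = r)))
      = (∑ s : Fin d, c s) - 2 * c r := by
    intro r
    rw [key (fun i => decide (i = r))]
    have : ∀ s : Fin d, (if decide (s = r) then (-1:ℝ) else 1) * c s
        = c s - (if s = r then 2 * c s else 0) := by
      intro s
      by_cases h : s = r <;> simp [h] <;> ring
    rw [Finset.sum_congr rfl (fun s _ => this s), Finset.sum_sub_distrib,
      Finset.sum_ite_eq' Finset.univ r (fun s => 2 * c s)]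
    simp
  have hcr : ∀ r : Fin d, c r = 0 ∨ c r = 2^d ∨ c r = -(2^d) := by
    intro r
    have hB := keyB r
    rw [← keyA] at hB
    rcases hf x with h0 | h0 <;>
      rcases hf (x + bv n (fun i => decide (i = r))) with h0' | h0' <;>
      rw [h0, h0'] at hB
    · left; linarith
    · right; left; linarith
    · right; right; linarith
    · left; linarith
  -- the maximizing u
  set u0 : Fin d → Bool := fun r => decide (c r < 0) with hu0
  have hnu : ∀ r : Fin d, (if u0 r then (-1:ℝ) else 1) * c r = if c r ≠ 0 then (2:ℝ)^d else 0 := by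
    intro r
    have hd : (0:ℝ) < 2^d := by positivity
    simp only [hu0]
    rcases hcr r with h | h | h <;> rw [h]
    · simp
    · have hlt : ¬ ((2:ℝ)^d < 0) := not_lt.mpr (le_of_lt hd)
      have hne : ((2:ℝ)^d) ≠ 0 := ne_of_gt hd
      simp [hlt, hne]
    · have hlt : (-(2:ℝ)^d) < 0 := neg_lt_zero.mpr hd
      have hne : (-(2:ℝ)^d) ≠ 0 := ne_of_lt hlt
      simp [hlt, hne]
  have hsum : ∑ r : Fin d, (if u0 r then (-1:ℝ) else 1) * c r
      = ((univ : Finset (Fin d)).filter (fun r => c r ≠ 0)).card * (2:ℝ)^d := by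
    rw [Finset.sum_congr rfl (fun r _ => hnu r), ← Finset.sum_filter, Finset.sum_const,
      nsmul_eq_mul]
  have hpos : f (x + bv n u0) = 1 := by
    rcases hf (x + bv n u0) with h | h
    · exact h
    · exfalso
      have hk := key u0
      rw [h, hsum] at hk
      have h2 : (0:ℝ) < 2^d := by positivity
      have h3 : (0:ℝ) ≤ ((univ : Finset (Fin d)).filter (fun r => c r ≠ 0)).card := by
        positivity
      nlinarith
  have hcard : ((univ : Finset (Fin d)).filter (fun r => c r ≠ 0)).card = 1 := by
    have hk := key u0
    rw [hpos, hsum, mul_one] at hk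
    have h2 : (2:ℝ)^d ≠ 0 := by positivity
    have h5 : ((((univ : Finset (Fin d)).filter (fun r => c r ≠ 0)).card : ℝ)) * 2^d
        = 1 * 2^d := by rw [← hk]; ring
    have := mul_right_cancel₀ h2 h5
    exact_mod_cast this
  obtain ⟨r0, hr0⟩ := Finset.card_eq_one.mp hcard
  have hr0mem : c r0 ≠ 0 := by
    have : r0 ∈ (univ : Finset (Fin d)).filter (fun r => c r ≠ 0) := by
      rw [hr0]; exact Finset.mem_singleton_self r0
    exact (Finset.mem_filter.mp this).2
  have hzero : ∀ s : Fin d, s ≠ r0 → c s = 0 := by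
    intro s hs
    by_contra hcs
    have : s ∈ (univ : Finset (Fin d)).filter (fun r => c r ≠ 0) :=
      Finset.mem_filter.mpr ⟨Finset.mem_univ s, hcs⟩
    rw [hr0, Finset.mem_singleton] at this
    exact hs this
  refine ⟨r0, fun u => ?_⟩
  have hgen : ∀ u : Fin d → Bool, (2:ℝ)^d * f (x + bv n u)
      = (if u r0 then (-1:ℝ) else 1) * c r0 := by
    intro u
    rw [key u]
    apply Finset.sum_eq_single r0
    · intro s _ hs; rw [hzero s hs, mul_zero]
    · intro h; exact absurd (Finset.mem_univ r0) h
  have hA : (2:ℝ)^d * f x = c r0 := by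
    have := hgen (fun _ => false)
    rw [hbv0, add_zero] at this
    simpa using this
  have h2 : (2:ℝ)^d ≠ 0 := by positivity
  apply mul_left_cancel₀ h2
  rw [hgen u, ← hA]
  ring

def eb {d : ℕ} (j : Fin d) : Fin d → Bool := fun i => decide (i = j)

lemma step_lemma [NeZero n] (f : (Fin d → ZMod n) → ℝ)
    (hf : ∀ x, f x = 1 ∨ f x = -1)
    (hloc : ∀ x, ∃ r : Fin d, ∀ u : Fin d → Bool,
      f (x + bv n u) = (if u r then -1 else 1) * f x)
    (x : Fin d → ZMod n) (r : Fin d)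
    (h : ∀ u : Fin d → Bool, f (x + bv n u) = (if u r then -1 else 1) * f x)
    (j : Fin d) :
    ∀ u : Fin d → Bool, f ((x + bv n (eb j)) + bv n u)
      = (if u r then -1 else 1) * f (x + bv n (eb j)) := by
  classical
  obtain ⟨r', h'⟩ := hloc (x + bv n (eb j))
  suffices hrr : r' = r by subst hrr; exact h'
  by_contra hne
  set t : Fin d := if j = r then r' else r with ht
  have hjt : j ≠ t := by
    by_cases hjr : j = r
    · rw [ht, if_pos hjr]; rw [← hjr] at hne; exact fun hh => hne hh.symm
    · rw [ht, if_neg hjr]; exact hjr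
  have hor : bv n (eb j) + bv n (eb t) = bv n (fun i => eb j i || eb t i) := by
    funext i
    by_cases h1 : i = j <;> by_cases h2 : i = t
    · exact absurd (h1.symm.trans h2) hjt
    · subst h1
      simp [bv, eb, hjt]
    · subst h2
      have hne2 : ¬ (t = j) := fun hh => hjt hh.symm
      simp [bv, eb, hne2]
    · simp [bv, eb, h1, h2]
  have hfx0 : f x ≠ 0 := by rcases hf x with hh | hh <;> rw [hh] <;> norm_num
  have hvj : f (x + bv n (eb j)) = (if j = r then (-1:ℝ) else 1) * f x := by
    rw [h (eb j)]
    congr 1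
    simp [eb, eq_comm]
  have key1 : f (x + (bv n (eb j) + bv n (eb t))) = -(f x) := by
    rw [hor, h (fun i => eb j i || eb t i)]
    have : (eb j r || eb t r) = true := by
      by_cases hjr : j = r
      · simp [eb, hjr]
      · have htr : t = r := by rw [ht, if_neg hjr]
        simp [eb, htr]
    rw [this]
    simp
  have key2 : f (x + (bv n (eb j) + bv n (eb t))) = f x := by
    rw [← add_assoc, h' (eb t)]
    by_cases hjr : j = r
    · have htr' : t = r' := by rw [ht, if_pos hjr]
      rw [hvj, if_pos hjr]
      have : eb t r' = true := by simp [eb, htr']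
      rw [this]
      norm_num
    · have htr : t = r := by rw [ht, if_neg hjr]
      rw [hvj, if_neg hjr]
      have : eb t r' = false := by
        simp [eb, htr]
        exact fun hh => hne hh
      rw [this]
      norm_num
  rw [key1] at key2
  have : f x = 0 := by linarith
  exact hfx0 this

lemma reach_lemma [NeZero n] (f : (Fin d → ZMod n) → ℝ)
    (hf : ∀ x, f x = 1 ∨ f x = -1)
    (hloc : ∀ x, ∃ r : Fin d, ∀ u : Fin d → Bool,
      f (x + bv n u) = (if u r then -1 else 1) * f x)
    (r : Fin d)
    (h0 : ∀ u : Fin d → Bool, f ((0 : Fin d → ZMod n) + bv n u)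
      = (if u r then -1 else 1) * f 0) :
    ∀ N : ℕ, ∀ m : Fin d → ℕ, (∑ j, m j) = N →
      (∀ u : Fin d → Bool, f ((fun j => ((m j : ZMod n))) + bv n u)
        = (if u r then -1 else 1) * f (fun j => ((m j : ZMod n))))
      ∧ f (fun j => ((m j : ZMod n))) = (-1)^(m r) * f 0 := by
  intro N
  induction N with
  | zero =>
    intro m hm
    have hm0 : ∀ j, m j = 0 := by
      intro j
      have := Finset.sum_eq_zero_iff.mp hm
      exact this j (Finset.mem_univ j)
    have hcast : (fun j => ((m j : ZMod n))) = (0 : Fin d → ZMod n) := by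
      funext j; rw [hm0 j]; simp
    rw [hcast]
    refine ⟨h0, ?_⟩
    rw [hm0 r]
    simp
  | succ N ih =>
    intro m hm
    have hex : ∃ j, m j ≠ 0 := by
      by_contra hc
      push_neg at hc
      rw [Finset.sum_congr rfl (fun j _ => hc j)] at hm
      simp at hm
    obtain ⟨j, hj⟩ := hex
    set m' : Fin d → ℕ := Function.update m j (m j - 1) with hm'
    have hsum' : ∑ i, m' i = N := by
      have h1 : ∑ i, m' i = m' j + ∑ i ∈ Finset.univ.erase j, m' i := by
        rw [Finset.add_sum_erase _ _ (Finset.mem_univ j)]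
      have h2 : ∑ i, m i = m j + ∑ i ∈ Finset.univ.erase j, m i := by
        rw [Finset.add_sum_erase _ _ (Finset.mem_univ j)]
      have h3 : ∑ i ∈ Finset.univ.erase j, m' i = ∑ i ∈ Finset.univ.erase j, m i := by
        apply Finset.sum_congr rfl
        intro i hi
        rw [hm', Function.update_of_ne (Finset.ne_of_mem_erase hi)]
      have h4 : m' j = m j - 1 := by rw [hm', Function.update_self]
      omega
    obtain ⟨ihl, ihv⟩ := ih m' hsum'
    have hcast : (fun i => ((m i : ZMod n))) = (fun i => ((m' i : ZMod n))) + bv n (eb j) := by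
      funext i
      by_cases hij : i = j
      · subst hij
        simp only [Pi.add_apply, bv, eb]
        rw [hm', Function.update_self]
        simp only [decide_true, if_pos]
        have : (m i : ℕ) = (m i - 1) + 1 := by omega
        rw [this]
        push_cast
        ring
      · simp only [Pi.add_apply, bv, eb]
        rw [hm', Function.update_of_ne hij]
        simp [hij]
    constructor
    · rw [hcast]
      exact step_lemma f hf hloc _ r ihl j
    · rw [hcast]
      have hval := ihl (eb j)
      by_cases hjr : j = r
      · subst hjr
        have h5' : (if eb j j = true then (-1:ℝ) else 1) = -1 := by simp [eb]
        have h6 : m' j = m j - 1 := by rw [hm', Function.update_self]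
        have h7 : m j = (m j - 1) + 1 := by omega
        have h8 : (-1:ℝ)^(m j) = (-1)^(m j - 1) * (-1) := by
          conv_lhs => rw [h7]
          rw [pow_succ]
        rw [hval, h5', ihv, h6, h8]
        ring
      · have h5' : (if eb j r = true then (-1:ℝ) else 1) = 1 := by
          have hfa : eb j r = false := by
            simp only [eb, decide_eq_false_iff_not]
            exact fun hh => hjr hh.symm
          rw [hfa]
          norm_num
        have h6 : m' r = m r := by rw [hm', Function.update_of_ne (fun hh => hjr hh.symm)]
        rw [hval, h5', ihv, h6]
        ring

theorem stmt_6 (n d : ℕ) [NeZero n] (hn : 3 ≤ n)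
    (f : (Fin d → ZMod n) → ℝ) (hf : ∀ x, f x = 1 ∨ f x = -1)
    (heq : ∑ x : Fin d → ZMod n,
        ∑ v ∈ Finset.univ.filter
            (fun v : Fin d → ZMod n => (∀ j, v j = 0 ∨ v j = 1 ∨ v j = -1) ∧ v ≠ 0),
          f x * f (x + v) = ((-1 - 3 ^ (d - 1) : ℝ)) * n ^ d) :
    Even n ∧ ∃ r : Fin d, ∃ ε : ℕ, ε < 2 ∧
      ∀ x : Fin d → ZMod n, f x = 1 ↔ (x r).val % 2 = ε := by
  classical
  haveI : Fact (1 < n) := ⟨by omega⟩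
  have h1 : (1 : ZMod n) ≠ 0 := one_ne_zero
  have h3 : (1 : ZMod n) ≠ -1 := by
    intro h
    have h2 : ((2:ℕ) : ZMod n) = 0 := by
      push_cast
      linear_combination h
    rw [ZMod.natCast_eq_zero_iff] at h2
    have := Nat.le_of_dvd (by norm_num) h2
    omega
  have hsq : ∀ x, (f x)^2 = 1 := fun x => by rcases hf x with h|h <;> rw [h] <;> norm_num
  have hsumsq : ∑ x : Fin d → ZMod n, (f x)^2 = (n:ℝ)^d := by
    rw [Finset.sum_congr rfl (fun x _ => hsq x), Finset.sum_const, Finset.card_univ,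
      nsmul_eq_mul, mul_one]
    rw [Fintype.card_fun]
    push_cast [ZMod.card, Fintype.card_fin]
    ring
  have hset : Finset.univ.filter
      (fun v : Fin d → ZMod n => (∀ j, v j = 0 ∨ v j = 1 ∨ v j = -1) ∧ v ≠ 0)
      = (cube n d).erase 0 := by
    ext v
    simp only [Finset.mem_filter, Finset.mem_univ, true_and, Finset.mem_erase, cube]
    tauto
  have h0cube : (0 : Fin d → ZMod n) ∈ cube n d := by simp [cube]
  have hcubesum : ∑ x : Fin d → ZMod n, f x * ∑ v ∈ cube n d, f (x + v)
      = -((3:ℝ)^(d-1)) * (n:ℝ)^d := by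
    have hx : ∀ x : Fin d → ZMod n, ∑ v ∈ cube n d, f (x+v)
        = f (x+0) + ∑ v ∈ (cube n d).erase 0, f (x+v) :=
      fun x => (Finset.add_sum_erase _ _ h0cube).symm
    calc ∑ x : Fin d → ZMod n, f x * ∑ v ∈ cube n d, f (x + v)
        = ∑ x : Fin d → ZMod n,
            ((f x)^2 + ∑ v ∈ (cube n d).erase 0, f x * f (x+v)) := by
          apply Finset.sum_congr rfl; intro x _
          rw [hx x, add_zero, mul_add, sq, Finset.mul_sum]
      _ = (n:ℝ)^d + ∑ x : Fin d → ZMod n, ∑ v ∈ (cube n d).erase 0, f x * f (x+v) := by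
          rw [Finset.sum_add_distrib, hsumsq]
      _ = (n:ℝ)^d + ((-1 - 3^(d-1)) * (n:ℝ)^d) := by
          rw [← hset, heq]
      _ = -((3:ℝ)^(d-1)) * (n:ℝ)^d := by ring
  have hzero : ∑ T ∈ (univ : Finset (Fin d)).powerset, cT d T * ∑ x, (Dop f T x)^2 = 0 := by
    rw [sos h1 h3 f, hsumsq, hcubesum]
    ring
  have hvanish : ∀ T ∈ (univ : Finset (Fin d)).powerset, T.card ≠ 1 →
      ∀ y, Dop f T y = 0 := by
    have hnn : ∀ T ∈ (univ : Finset (Fin d)).powerset,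
        0 ≤ cT d T * ∑ x, (Dop f T x)^2 :=
      fun T _ => mul_nonneg (cT_nonneg T) (Finset.sum_nonneg fun x _ => sq_nonneg _)
    have hall := (Finset.sum_eq_zero_iff_of_nonneg hnn).mp hzero
    intro T hT hcT y
    have hT0 := hall T hT
    have hsum0 : ∑ x, (Dop f T x)^2 = 0 := by
      rcases mul_eq_zero.mp hT0 with h | h
      · exact absurd h (ne_of_gt (cT_pos T hcT))
      · exact h
    have := (Finset.sum_eq_zero_iff_of_nonneg (fun x _ => sq_nonneg _)).mp hsum0 y
      (Finset.mem_univ y)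
    exact pow_eq_zero_iff (by norm_num) |>.mp this
  have hloc := local_struct f hf hvanish
  obtain ⟨r, hr⟩ := hloc 0
  have hreach := reach_lemma f hf hloc r hr
  have hne0 : f 0 ≠ 0 := by rcases hf 0 with h|h <;> rw [h] <;> norm_num
  have heven : Even n := by
    have hthis := (hreach (∑ j, (if j = r then n else 0))
      (fun j => if j = r then n else 0) rfl).2
    have hcast : (fun j => (((if j = r then n else 0) : ℕ) : ZMod n))
        = (0 : Fin d → ZMod n) := by
      funext j; by_cases h : j = r <;> simp [h, ZMod.natCast_self]
    simp only [hcast, if_pos rfl] at hthis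
    have h9 : (1:ℝ) * f 0 = (-1)^n * f 0 := by rw [one_mul]; exact hthis
    have hpow : (-1:ℝ)^n = 1 := (mul_right_cancel₀ hne0 h9).symm
    exact (neg_one_pow_eq_one_iff_even (by norm_num : (-1:ℝ) ≠ 1)).mp hpow
  have hxval : ∀ x : Fin d → ZMod n, f x = (-1:ℝ)^((x r).val) * f 0 := by
    intro x
    have hthis := (hreach (∑ j, (x j).val) (fun j => (x j).val) rfl).2
    have hcast : (fun j => (((x j).val : ℕ) : ZMod n)) = x := by
      funext j; exact ZMod.natCast_rightInverse (x j)
    rw [hcast] at hthis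
    exact hthis
  rcases hf 0 with h00 | h00
  · refine ⟨heven, r, 0, by norm_num, fun x => ?_⟩
    have hx := hxval x
    rw [h00, mul_one] at hx
    rcases Nat.even_or_odd ((x r).val) with he | ho
    · rw [hx, he.neg_one_pow, Nat.even_iff.mp he]
      simp
    · have hfx : f x = -1 := by rw [hx, ho.neg_one_pow]
      rw [hfx, Nat.odd_iff.mp ho]
      norm_num
  · refine ⟨heven, r, 1, by norm_num, fun x => ?_⟩
    have hx := hxval x
    rw [h00] at hx
    rcases Nat.even_or_odd ((x r).val) with he | ho
    · have hfx : f x = -1 := by rw [hx, he.neg_one_pow]; ring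
      rw [hfx, Nat.even_iff.mp he]
      norm_num
    · have hfx : f x = 1 := by rw [hx, ho.neg_one_pow]; ring
      rw [hfx, Nat.odd_iff.mp ho]
      simp
end

section
/- Let $w$ be a word of length $r \geq 2$ over an alphabet $\Sigma$ in which all $r$ letters are distinct, and let $n \geq r$. For any labeling $L : (\mathbb{Z}/n\mathbb{Z})^d \to \Sigma$, the number of occurrences of $w$ (pairs $(x,v)$, $v \in \{-1,0,1\}^d\setminus\{0\}$, with $L(x + (i-1)v) = w_i$ for all $1 \leq i \leq r$) is at most $(3^{d-1}/(r-1)) n^d$. -/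
/-!
Split the positions into `A` and `B` according to the parity of the index of their letter. An
occurrence `(x, v)` yields `r - 1` steps `x + i v ↦ x + (i + 1) v` between consecutive letters;
oriented from `A` to `B` they inject into the pairs `(y, u)` with `y ∈ A`, `y + u ∈ B` and
`u ∈ {-1, 0, 1}ᵈ`. This count is at most `⟪1_A, K 1_B⟫` for `K = ∏ⱼ (T_{eⱼ} + 1 + T_{-eⱼ})`, a
product of commuting self-adjoint operators with spectrum in `[-1, 3]`, so the spectrum of `K` lies
in `[-3ᵈ⁻¹, 3ᵈ]`. As `1_A ⊥ 1_B`, polarization gives `⟪1_A, K 1_B⟫ ≤ 3ᵈ⁻¹ (|A| + |B|) ≤ 3ᵈ⁻¹ nᵈ`.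
-/

open Finset

namespace WordOccurrences

section Convolution

variable {G : Type*} [AddCommGroup G]

def shift (e : G) : Module.End ℝ (G → ℝ) := LinearMap.funLeft ℝ ℝ (· + e)

@[simp]
lemma shift_apply (e : G) (g : G → ℝ) (p : G) : shift e g p = g (p + e) := rfl

lemma shift_zero : shift (0 : G) = 1 := by
  ext g p; simp

lemma shift_add (e e' : G) : shift (e + e') = shift e * shift e' := by
  ext g p; simp [add_assoc]

lemma commute_shift (e e' : G) : Commute (shift e) (shift e') := by
  rw [Commute, SemiconjBy, ← shift_add, ← shift_add, add_comm]

def conv (W : Multiset G) : Module.End ℝ (G → ℝ) := (W.map shift).sum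

lemma conv_apply (W : Multiset G) (g : G → ℝ) (p : G) :
    conv W g p = (W.map fun u => g (p + u)).sum := by
  induction W using Multiset.induction_on with
  | empty => simp [conv]
  | cons u W ih => simpa [conv] using ih

lemma conv_add (W W' : Multiset G) : conv (W + W') = conv W + conv W' := by
  simp [conv]

lemma conv_map_add_right (W : Multiset G) (e : G) :
    conv (W.map (· + e)) = shift e * conv W := by
  simp only [conv, Multiset.map_map, Function.comp_def, shift_add, (commute_shift _ e).eq,
    Multiset.sum_map_mul_left]

lemma commute_conv_shift (W : Multiset G) (e : G) : Commute (conv W) (shift e) :=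
  Commute.multiset_sum_left _ _ fun _ hu => by
    obtain ⟨u, -, rfl⟩ := Multiset.mem_map.1 hu
    exact commute_shift u e

def smear (e : G) : Module.End ℝ (G → ℝ) := shift e + 1 + shift (-e)

/-- The multiset of all `∑ εᵢ eᵢ` with `εᵢ ∈ {-1, 0, 1}`, counted with multiplicity. -/
def signedSums : List G → Multiset G
  | [] => {0}
  | e :: l => (signedSums l).map (· + e) + signedSums l + (signedSums l).map (· + -e)

lemma conv_signedSums_cons (e : G) (l : List G) :
    conv (signedSums (e :: l)) = smear e * conv (signedSums l) := by
  simp only [signedSums, smear, conv_add, conv_map_add_right, add_mul, one_mul]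

lemma signedSums_map_neg (l : List G) : (signedSums l).map Neg.neg = signedSums l := by
  induction l with
  | nil => simp [signedSums]
  | cons e l ih =>
    conv_rhs => rw [signedSums, ← ih]
    simp only [signedSums, Multiset.map_add, Multiset.map_map, Function.comp_def, neg_add, neg_neg]
    abel

lemma sum_mem_signedSums_ofFn {m : ℕ} (e x : Fin m → G)
    (h : ∀ j, x j = 0 ∨ x j = e j ∨ x j = -e j) : ∑ j, x j ∈ signedSums (List.ofFn e) := by
  induction m with
  | zero => simp [signedSums]
  | succ m ih =>
    have ih' := ih (fun j => e j.succ) (fun j => x j.succ) fun j => h j.succ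
    rw [List.ofFn_succ, Fin.sum_univ_succ, add_comm (x 0)]
    rcases h 0 with h0 | h0 | h0 <;> simp [signedSums, h0, ih']

variable [Fintype G]

lemma shift_dotProduct_shift (e : G) (f g : G → ℝ) : shift e f ⬝ᵥ shift e g = f ⬝ᵥ g :=
  Equiv.sum_comp (Equiv.addRight e) fun p => f p * g p

lemma dotProduct_shift (e : G) (f g : G → ℝ) : f ⬝ᵥ shift e g = shift (-e) f ⬝ᵥ g := by
  rw [← shift_dotProduct_shift (-e) f, ← Module.End.mul_apply, ← shift_add, neg_add_cancel,
    shift_zero, Module.End.one_apply]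

lemma dotProduct_conv (W : Multiset G) (f g : G → ℝ) :
    f ⬝ᵥ conv W g = conv (W.map Neg.neg) f ⬝ᵥ g := by
  induction W using Multiset.induction_on with
  | empty => simp [conv]
  | cons u W ih =>
    simp only [conv, Multiset.map_cons, Multiset.sum_cons, LinearMap.add_apply] at ih ⊢
    rw [dotProduct_add, add_dotProduct, dotProduct_shift, ih]

/-- Test the quadratic form of `S` on `g ± shift e g`. -/
lemma dotProduct_smear_mul_bounds {S : Module.End ℝ (G → ℝ)} {e : G}
    (hS : Commute S (shift e)) {c : ℝ} (hc : 0 ≤ c)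
    (h : ∀ g, -(c * (g ⬝ᵥ g)) ≤ g ⬝ᵥ S g ∧ g ⬝ᵥ S g ≤ 3 * c * (g ⬝ᵥ g)) (g : G → ℝ) :
    -(3 * c * (g ⬝ᵥ g)) ≤ g ⬝ᵥ (smear e * S) g ∧
      g ⬝ᵥ (smear e * S) g ≤ 9 * c * (g ⬝ᵥ g) := by
  set T := shift e
  have hST : S (T g) = T (S g) := congrArg (· g) hS.eq
  have hY : g ⬝ᵥ (smear e * S) g
      = g ⬝ᵥ T (S g) + g ⬝ᵥ S g + T g ⬝ᵥ S g := by
    simp only [smear, Module.End.mul_apply, LinearMap.add_apply, Module.End.one_apply,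
      dotProduct_add, dotProduct_shift (-e), neg_neg, T]
  have hTT : T g ⬝ᵥ T (S g) = g ⬝ᵥ S g := shift_dotProduct_shift e g (S g)
  have hplus : (g + T g) ⬝ᵥ S (g + T g) = g ⬝ᵥ (smear e * S) g + g ⬝ᵥ S g := by
    rw [hY, map_add, hST, add_dotProduct, dotProduct_add, dotProduct_add, hTT]; ring
  have hminus : (g - T g) ⬝ᵥ S (g - T g) = 3 * (g ⬝ᵥ S g) - g ⬝ᵥ (smear e * S) g := by
    rw [hY, map_sub, hST, sub_dotProduct, dotProduct_sub, dotProduct_sub, hTT]; ring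
  have hTg : T g ⬝ᵥ T g = g ⬝ᵥ g := shift_dotProduct_shift e g g
  have hnplus : (g + T g) ⬝ᵥ (g + T g) = 2 * (g ⬝ᵥ g) + 2 * (g ⬝ᵥ T g) := by
    rw [add_dotProduct, dotProduct_add, dotProduct_add, hTg, dotProduct_comm (T g) g]; ring
  have hnminus : (g - T g) ⬝ᵥ (g - T g) = 2 * (g ⬝ᵥ g) - 2 * (g ⬝ᵥ T g) := by
    rw [sub_dotProduct, dotProduct_sub, dotProduct_sub, hTg, dotProduct_comm (T g) g]; ring
  have hcorr : 0 ≤ c * ((g - T g) ⬝ᵥ (g - T g)) :=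
    mul_nonneg hc (by simpa using dotProduct_self_star_nonneg (g - T g))
  obtain ⟨hp1, hp2⟩ := h (g + T g)
  obtain ⟨hm1, hm2⟩ := h (g - T g)
  rw [hplus, hnplus] at hp1 hp2
  rw [hminus, hnminus] at hm1 hm2
  rw [hnminus] at hcorr
  constructor
  · linear_combination (3 * hp1 + hm2) / 4
  · linear_combination (3 * hp2 + hm1 + 8 * hcorr) / 4

lemma dotProduct_conv_signedSums_bounds (l : List G) (g : G → ℝ) :
    -(3 ^ l.length / 3 * (g ⬝ᵥ g)) ≤ g ⬝ᵥ conv (signedSums l) g ∧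
      g ⬝ᵥ conv (signedSums l) g ≤ 3 ^ l.length * (g ⬝ᵥ g) := by
  induction l generalizing g with
  | nil =>
    have := dotProduct_self_star_nonneg g
    simp only [signedSums, conv, Multiset.map_singleton, Multiset.sum_singleton, shift_zero,
      Module.End.one_apply, List.length_nil, pow_zero, star_trivial] at this ⊢
    constructor <;> linarith
  | cons e l ih =>
    have key := dotProduct_smear_mul_bounds (commute_conv_shift (signedSums l) e)
      (c := 3 ^ l.length / 3) (by positivity) (fun g => by
        convert ih g using 2; ring) g
    rw [conv_signedSums_cons, List.length_cons, pow_succ]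
    constructor <;> linarith [key.1, key.2]

lemma dotProduct_conv_signedSums_le (l : List G) {a b : G → ℝ} (hab : a ⬝ᵥ b = 0) :
    a ⬝ᵥ conv (signedSums l) b ≤ 3 ^ l.length / 3 * (a ⬝ᵥ a + b ⬝ᵥ b) := by
  have hsymm : b ⬝ᵥ conv (signedSums l) a = a ⬝ᵥ conv (signedSums l) b := by
    rw [dotProduct_comm, dotProduct_conv, signedSums_map_neg]
  have hplus := (dotProduct_conv_signedSums_bounds l (a + b)).2
  have hminus := (dotProduct_conv_signedSums_bounds l (a - b)).1
  simp only [map_add, map_sub, add_dotProduct, dotProduct_add, sub_dotProduct, dotProduct_sub,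
    hsymm, dotProduct_comm b a, hab] at hplus hminus
  linarith

lemma card_filter_add_mem_le [DecidableEq G] {A B D : Finset G} (l : List G) (hAB : Disjoint A B)
    (hD : D.val ≤ signedSums l) :
    (#{x ∈ A ×ˢ D | x.1 + x.2 ∈ B} : ℝ) ≤ 3 ^ l.length / 3 * (#A + #B) := by
  set a : G → ℝ := fun p => if p ∈ A then 1 else 0
  set b : G → ℝ := fun p => if p ∈ B then 1 else 0
  have hcount : (#{x ∈ A ×ˢ D | x.1 + x.2 ∈ B} : ℝ) = ∑ y, a y * ∑ u ∈ D, b (y + u) := by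
    rw [natCast_card_filter, sum_product]
    simp [a, b, ite_mul, sum_ite_mem]
  have hconv : ∀ y, ∑ u ∈ D, b (y + u) ≤ conv (signedSums l) b y := by
    intro y
    obtain ⟨W, hW⟩ := Multiset.le_iff_exists_add.1 hD
    rw [conv_apply, hW, Multiset.map_add, Multiset.sum_add]
    refine le_add_of_nonneg_right <| Multiset.sum_nonneg fun _ hx => ?_
    obtain ⟨u, -, rfl⟩ := Multiset.mem_map.1 hx
    positivity
  have haa : a ⬝ᵥ a = #A := by simp [a, dotProduct]
  have hbb : b ⬝ᵥ b = #B := by simp [b, dotProduct]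
  have hab : a ⬝ᵥ b = 0 := by
    refine sum_eq_zero fun p _ => ?_
    by_cases hp : p ∈ A
    · simp [a, b, hp, disjoint_left.1 hAB hp]
    · simp [a, hp]
  calc (#{x ∈ A ×ˢ D | x.1 + x.2 ∈ B} : ℝ)
      ≤ a ⬝ᵥ conv (signedSums l) b := by
        rw [hcount]
        exact sum_le_sum fun y _ => mul_le_mul_of_nonneg_left (hconv y) (by positivity)
    _ ≤ 3 ^ l.length / 3 * (#A + #B) := by
        rw [← haa, ← hbb]
        exact dotProduct_conv_signedSums_le l hab

end Convolution

def occurrences {G α : Type*} [AddCommGroup G] [Fintype G] [DecidableEq α] {r : ℕ} (L : G → α)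
    (w : Fin r → α) (D : Finset G) : Finset (G × G) :=
  {p ∈ univ ×ˢ D | ∀ i : Fin r, L (p.1 + (i : ℕ) • p.2) = w i}

section Words

variable {G α : Type*} [Fintype G] [DecidableEq α] {k : ℕ} (L : G → α) (w : Fin (k + 1) → α)

def evenPart : Finset G := {p | ∃ j : Fin (k + 1), Even (j : ℕ) ∧ L p = w j}

def oddPart : Finset G := {p | ∃ j : Fin (k + 1), Odd (j : ℕ) ∧ L p = w j}

variable {L w}

lemma mem_evenPart_iff (hw : Function.Injective w) {p : G} {j : Fin (k + 1)} (h : L p = w j) :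
    p ∈ evenPart L w ↔ Even (j : ℕ) := by
  simp only [evenPart, mem_filter, mem_univ, true_and]
  exact ⟨fun ⟨j', hj', h'⟩ => hw (h'.symm.trans h) ▸ hj', fun hj => ⟨j, hj, h⟩⟩

lemma mem_oddPart_iff (hw : Function.Injective w) {p : G} {j : Fin (k + 1)} (h : L p = w j) :
    p ∈ oddPart L w ↔ Odd (j : ℕ) := by
  simp only [oddPart, mem_filter, mem_univ, true_and]
  exact ⟨fun ⟨j', hj', h'⟩ => hw (h'.symm.trans h) ▸ hj', fun hj => ⟨j, hj, h⟩⟩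

lemma disjoint_evenPart_oddPart (hw : Function.Injective w) :
    Disjoint (evenPart L w) (oddPart L w) := by
  refine disjoint_left.2 fun p hp hp' => ?_
  obtain ⟨j, hj, h⟩ := (mem_filter.1 hp).2
  exact Nat.not_odd_iff_even.2 hj ((mem_oddPart_iff hw h).1 hp')

lemma card_evenPart_add_card_oddPart_le [DecidableEq G] (hw : Function.Injective w) :
    #(evenPart L w) + #(oddPart L w) ≤ Fintype.card G := by
  rw [← card_union_of_disjoint (disjoint_evenPart_oddPart hw)]
  exact card_le_univ _

variable [AddCommGroup G]

variable (L w) in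
def letterSteps (D : Finset G) : Finset (G × G) :=
  {p ∈ univ ×ˢ D | ∃ i : Fin k, L p.1 = w i.castSucc ∧ L (p.1 + p.2) = w i.succ}

lemma card_occurrences_mul_le (hw : Function.Injective w) (D : Finset G) :
    #(occurrences L w D) * k ≤ #(letterSteps L w D) := by
  have hcard : #(occurrences L w D) * k = #(occurrences L w D ×ˢ (univ : Finset (Fin k))) := by
    simp
  rw [hcard]
  refine card_le_card_of_injOn (fun q => (q.1.1 + (q.2 : ℕ) • q.1.2, q.1.2)) ?_ ?_
  · rintro ⟨⟨x, v⟩, i⟩ hq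
    simp only [coe_product, Set.mem_prod, mem_coe, occurrences, mem_filter, mem_product,
      mem_univ, true_and] at hq
    obtain ⟨⟨hv, hocc⟩, -⟩ := hq
    refine mem_filter.2 ⟨mem_product.2 ⟨mem_univ _, hv⟩, i, ?_, ?_⟩
    · simpa using hocc i.castSucc
    · simpa [succ_nsmul, add_assoc] using hocc i.succ
  · rintro ⟨⟨x, v⟩, i⟩ hq ⟨⟨x', v'⟩, i'⟩ hq' heq
    obtain ⟨hpos, rfl⟩ := Prod.ext_iff.1 heq
    have hocc := (mem_filter.1 (mem_product.1 hq).1).2 i.castSucc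
    have hocc' := (mem_filter.1 (mem_product.1 hq').1).2 i'.castSucc
    simp only [Fin.val_castSucc] at hocc hocc' hpos
    have hii : i = i' := Fin.castSucc_injective _ (hw (hocc.symm.trans (hpos ▸ hocc')))
    subst hii
    simp [add_right_cancel hpos]

lemma reverse_notMem_letterSteps (hw : Function.Injective w) {D : Finset G} {p u : G}
    (h : (p, u) ∈ letterSteps L w D) : (p + u, -u) ∉ letterSteps L w D := by
  intro h'
  obtain ⟨i, h1, h2⟩ := (mem_filter.1 h).2
  obtain ⟨i', h1', h2'⟩ := (mem_filter.1 h').2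
  simp only [add_neg_cancel_right] at h1' h2'
  have e1 := congrArg Fin.val (hw (h2.symm.trans h1'))
  have e2 := congrArg Fin.val (hw (h1.symm.trans h2'))
  simp only [Fin.val_succ, Fin.val_castSucc] at e1 e2
  omega

/-- Orient each letter step from its even-indexed end; this is injective because a step and its
reversal are never both letter steps. -/
lemma card_letterSteps_le [DecidableEq G] (hw : Function.Injective w) {D : Finset G}
    (hD : ∀ v ∈ D, -v ∈ D) :
    #(letterSteps L w D) ≤ #{x ∈ evenPart L w ×ˢ D | x.1 + x.2 ∈ oddPart L w} := by
  refine card_le_card_of_injOn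
    (fun p => if p.1 ∈ evenPart L w then p else (p.1 + p.2, -p.2)) ?_ ?_
  · rintro ⟨p, u⟩ h
    rw [mem_coe] at h
    obtain ⟨hu, i, h1, h2⟩ := mem_filter.1 h
    replace hu : u ∈ D := (mem_product.1 hu).2
    have h1' : L (p + u + -u) = w i.castSucc := by simpa using h1
    rw [mem_coe]
    dsimp only
    split_ifs with hp
    · refine mem_filter.2 ⟨mem_product.2 ⟨hp, hu⟩, (mem_oddPart_iff hw h2).2 ?_⟩
      have := (mem_evenPart_iff hw h1).1 hp
      simp only [Fin.val_succ, Fin.val_castSucc] at this ⊢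
      exact Even.add_one this
    · have hi : ¬Even (i : ℕ) := by simpa using (mem_evenPart_iff hw h1).not.1 hp
      refine mem_filter.2
        ⟨mem_product.2 ⟨(mem_evenPart_iff hw h2).2 ?_, hD u hu⟩, (mem_oddPart_iff hw h1').2 ?_⟩
      · simpa [Nat.even_add_one] using hi
      · simpa using hi
  · rintro ⟨p, u⟩ h ⟨p', u'⟩ h' heq
    simp only at heq
    split_ifs at heq with hp hp'
    · exact heq
    · exact absurd (heq ▸ h) (by simpa using reverse_notMem_letterSteps hw h')
    · exact absurd (heq ▸ h') (by simpa using reverse_notMem_letterSteps hw h)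
    · obtain ⟨hpos, hdir⟩ := Prod.ext_iff.1 heq
      have hu : u = u' := neg_injective hdir
      subst hu
      simp [add_right_cancel hpos]

end Words

section SignVectors

variable (d : ℕ) (R : Type*) [Ring R] [Fintype R] [DecidableEq R]

def signVectors : Finset (Fin d → R) := {v | ∀ j, v j = 0 ∨ v j = 1 ∨ v j = -1}

variable {d R}

lemma neg_mem_signVectors {v : Fin d → R} (hv : v ∈ signVectors d R) : -v ∈ signVectors d R := by
  simp only [signVectors, mem_filter, mem_univ, true_and, Pi.neg_apply, neg_eq_iff_eq_neg] at hv ⊢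
  exact fun j => by rcases hv j with h | h | h <;> simp [h]

lemma signVectors_val_le_signedSums :
    (signVectors d R).val ≤ signedSums (List.ofFn fun j : Fin d => Pi.single j (1 : R)) := by
  refine (Multiset.le_iff_subset (signVectors d R).nodup).2 fun v hv => ?_
  have hv' : ∀ j, v j = 0 ∨ v j = 1 ∨ v j = -1 := (mem_filter.1 hv).2
  rw [← univ_sum_single v]
  refine sum_mem_signedSums_ofFn _ _ fun j => ?_
  rcases hv' j with h | h | h <;> simp [h, Pi.single_neg]

end SignVectors

end WordOccurrences

open WordOccurrences

theorem stmt_16_general (n d r : ℕ) [NeZero n] (hr : 2 ≤ r)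
    {Alphabet : Type*} [DecidableEq Alphabet]
    (w : Fin r → Alphabet) (hw : Function.Injective w)
    (L : (Fin d → ZMod n) → Alphabet) :
    ((Finset.univ.filter
        (fun p : (Fin d → ZMod n) × (Fin d → ZMod n) =>
          (∀ j, p.2 j = 0 ∨ p.2 j = 1 ∨ p.2 j = -1) ∧ p.2 ≠ 0 ∧
          ∀ i : Fin r, L (p.1 + (i : ℕ) • p.2) = w i)).card : ℝ)
      ≤ 3 ^ (d - 1) * n ^ d / ((r : ℝ) - 1) := by
  obtain ⟨k, rfl⟩ : ∃ k, r = k + 1 := ⟨r - 1, by omega⟩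
  set V := signVectors d (ZMod n)
  rw [show ((k + 1 : ℕ) : ℝ) - 1 = k by push_cast; ring,
    le_div_iff₀ (by exact_mod_cast (by omega : 0 < k))]
  calc _ ≤ (#(occurrences L w V) * k : ℝ) := by
        gcongr
        intro p hp
        simp only [occurrences, V, signVectors, mem_filter, mem_product, mem_univ, true_and] at hp ⊢
        exact ⟨hp.1, hp.2.2⟩
    _ ≤ #(letterSteps L w V) := by exact_mod_cast card_occurrences_mul_le hw V
    _ ≤ #{x ∈ evenPart L w ×ˢ V | x.1 + x.2 ∈ oddPart L w} := by
        exact_mod_cast card_letterSteps_le (L := L) (D := V) hw fun _ => neg_mem_signVectors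
    _ ≤ 3 ^ d / 3 * (#(evenPart L w) + #(oddPart L w)) := by
        simpa using card_filter_add_mem_le _ (disjoint_evenPart_oddPart hw)
          signVectors_val_le_signedSums
    _ ≤ 3 ^ (d - 1) * n ^ d := by
        have hcard : (#(evenPart L w) + #(oddPart L w) : ℝ) ≤ n ^ d := by
          exact_mod_cast (card_evenPart_add_card_oddPart_le (L := L) hw).trans_eq
            (by simp : Fintype.card (Fin d → ZMod n) = n ^ d)
        have hpow : (3 : ℝ) ^ d / 3 ≤ 3 ^ (d - 1) := by
          rcases d with _ | d <;> norm_num [pow_succ]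
        gcongr

theorem stmt_16 (n d r : ℕ) [NeZero n] (hr : 2 ≤ r) (hn : r ≤ n)
    {Alphabet : Type*} [DecidableEq Alphabet]
    (w : Fin r → Alphabet) (hw : Function.Injective w)
    (L : (Fin d → ZMod n) → Alphabet) :
    ((Finset.univ.filter
        (fun p : (Fin d → ZMod n) × (Fin d → ZMod n) =>
          (∀ j, p.2 j = 0 ∨ p.2 j = 1 ∨ p.2 j = -1) ∧ p.2 ≠ 0 ∧
          ∀ i : Fin r, L (p.1 + (i : ℕ) • p.2) = w i)).card : ℝ)
      ≤ 3 ^ (d - 1) * n ^ d / ((r : ℝ) - 1) :=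
  stmt_16_general n d r hr w hw L
end

section
/- Let $w$ be a word of length $r \geq 2$ with all letters distinct, let $\mathcal{O}$ (resp. $\mathcal{E}$) be the set of letters at odd (resp. even) positions of $w$, and let $L : (\mathbb{Z}/n\mathbb{Z})^d \to \Sigma$ be any labeling with $n \geq r$. Then each occurrence of $w$ contains exactly $r-1$ occurrences of an adjacent pair $(p, p+v)$ with $L(p) \in \mathcal{O}$, $L(p+v) \in \mathcal{E}$ or $L(p) \in \mathcal{E}$, $L(p+v) \in \mathcal{O}$, and distinct occurrences of $w$ give rise to disjoint sets of such adjacent pairs; consequently $(r-1) \cdot \#(w) \leq \#(\mathcal{O}\mathcal{E})$, where $\#(\mathcal{O}\mathcal{E})$ counts ordered pairs $(x,v)$ with $L(x) \in \mathcal{O}$ and $L(x+v) \in \mathcal{E}$ (or vice versa with the appropriate orientation fixed). -/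
/-!
The `k`-th step `(x + k • v, x + (k + 1) • v)` of an occurrence `(x, v)` of `w` joins the letters
`w k` and `w (k + 1)`, one at an odd and one at an even position. Orienting it from its
odd-position end gives an `𝒪ℰ`-pair whose two labels recover `k`, because the letters of `w`
are distinct; the pair together with `k` then recovers `(x, v)`. So the `r - 1` steps of all
occurrences give pairwise distinct `𝒪ℰ`-pairs.
-/

open Finset Function

section Occurrence

variable {G α : Type*} [AddGroup G] {r : ℕ}

def IsOccurrence (L : G → α) (w : Fin r → α) (x v : G) : Prop :=
  ∀ i : Fin r, L (x + (i : ℕ) • v) = w i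

def orientedStep (x v : G) (k : ℕ) : G × G :=
  if k % 2 = 0 then (x + k • v, v) else (x + (k + 1) • v, -v)

theorem orientedStep_snd_eq_or (x v : G) (k : ℕ) :
    (orientedStep x v k).2 = v ∨ (orientedStep x v k).2 = -v := by
  unfold orientedStep
  split_ifs <;> simp

theorem orientedStep_injective (k : ℕ) :
    Injective fun p : G × G => orientedStep p.1 p.2 k := by
  rintro ⟨x, v⟩ ⟨x', v'⟩ h
  dsimp only [orientedStep] at h
  split_ifs at h
  · obtain ⟨hx, rfl⟩ := Prod.ext_iff.mp h
    rw [add_left_inj] at hx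
    rw [hx]
  · obtain ⟨hx, hv⟩ := Prod.ext_iff.mp h
    obtain rfl := neg_inj.mp hv
    rw [add_left_inj] at hx
    rw [hx]

theorem IsOccurrence.orientedStep_labels {L : G → α} {w : Fin r → α} {x v : G}
    (hocc : IsOccurrence L w x v) {k : ℕ} (hk : k + 1 < r) :
    ∃ i j : Fin r, (i : ℕ) % 2 = 0 ∧ (j : ℕ) % 2 = 1 ∧ min (i : ℕ) j = k ∧
      L (orientedStep x v k).1 = w i ∧
      L ((orientedStep x v k).1 + (orientedStep x v k).2) = w j := by
  have hnext : x + (k + 1) • v = x + k • v + v := by rw [succ_nsmul, add_assoc]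
  unfold orientedStep
  split_ifs with hpar
  · refine ⟨⟨k, by omega⟩, ⟨k + 1, hk⟩, hpar, by simp only; omega, by simp, hocc ⟨k, _⟩, ?_⟩
    rw [← hnext]
    exact hocc ⟨k + 1, hk⟩
  · refine ⟨⟨k + 1, hk⟩, ⟨k, by omega⟩, by simp only; omega, by simp only; omega, by simp,
      hocc ⟨k + 1, hk⟩, ?_⟩
    rw [hnext, add_neg_cancel_right]
    exact hocc ⟨k, by omega⟩

theorem IsOccurrence.eq_of_orientedStep_eq {L : G → α} {w : Fin r → α} (hw : Injective w)
    {x v x' v' : G} (hocc : IsOccurrence L w x v) (hocc' : IsOccurrence L w x' v')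
    {k k' : ℕ} (hk : k + 1 < r) (hk' : k' + 1 < r)
    (h : orientedStep x v k = orientedStep x' v' k') : (x, v) = (x', v') ∧ k = k' := by
  obtain ⟨i, j, -, -, hmin, hi, hj⟩ := hocc.orientedStep_labels hk
  obtain ⟨i', j', -, -, hmin', hi', hj'⟩ := hocc'.orientedStep_labels hk'
  rw [h] at hi hj
  obtain rfl : i = i' := hw (hi.symm.trans hi')
  obtain rfl : j = j' := hw (hj.symm.trans hj')
  obtain rfl : k = k' := hmin.symm.trans hmin'
  exact ⟨orientedStep_injective k h, rfl⟩

theorem card_mul_card_occurrences_le [Fintype G] [DecidableEq α]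
    (dir : G → Prop) [DecidablePred dir] (hdir : ∀ v, dir v → dir (-v))
    (w : Fin r → α) (hw : Injective w) (L : G → α) :
    (r - 1) * #{p : G × G | dir p.2 ∧ ∀ i : Fin r, L (p.1 + (i : ℕ) • p.2) = w i}
      ≤ #{p : G × G | dir p.2 ∧ (∃ i : Fin r, (i : ℕ) % 2 = 0 ∧ L p.1 = w i) ∧
          ∃ i : Fin r, (i : ℕ) % 2 = 1 ∧ L (p.1 + p.2) = w i} := by
  set occ := ({p : G × G | dir p.2 ∧ ∀ i : Fin r, L (p.1 + (i : ℕ) • p.2) = w i} : Finset _)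
  calc (r - 1) * #occ = #(occ ×ˢ (univ : Finset (Fin (r - 1)))) := by
        rw [card_product, card_univ, Fintype.card_fin, mul_comm]
    _ ≤ _ := by
      refine card_le_card_of_injOn (fun q => orientedStep q.1.1 q.1.2 q.2) ?_ ?_
      · rintro ⟨⟨x, v⟩, k⟩ hq
        simp only [occ, coe_product, Set.mem_prod, mem_coe, mem_filter_univ] at hq
        obtain ⟨⟨hv, hocc⟩, -⟩ := hq
        obtain ⟨i, j, hi, hj, -, hLi, hLj⟩ := IsOccurrence.orientedStep_labels hocc (k := k)
          (by omega)
        simp only [coe_filter, mem_univ, true_and, Set.mem_ofPred_eq]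
        refine ⟨?_, ⟨i, hi, hLi⟩, ⟨j, hj, hLj⟩⟩
        rcases orientedStep_snd_eq_or x v k with h | h <;> rw [h]
        exacts [hv, hdir v hv]
      · rintro ⟨⟨x, v⟩, k⟩ hq ⟨⟨x', v'⟩, k'⟩ hq' h
        simp only [occ, coe_product, Set.mem_prod, mem_coe, mem_filter_univ] at hq hq'
        obtain ⟨hxv, hk⟩ := IsOccurrence.eq_of_orientedStep_eq hw hq.1.2 hq'.1.2
          (k := k) (k' := k') (by omega) (by omega) h
        rw [hxv, Fin.ext hk]

end Occurrence

theorem unitDirection_neg {ι R : Type*} [Ring R] {v : ι → R}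
    (hv : (∀ j, v j = 0 ∨ v j = 1 ∨ v j = -1) ∧ v ≠ 0) :
    (∀ j, (-v) j = 0 ∨ (-v) j = 1 ∨ (-v) j = -1) ∧ -v ≠ 0 := by
  refine ⟨fun j => ?_, neg_ne_zero.mpr hv.2⟩
  rcases hv.1 j with h | h | h <;> simp [h]

theorem stmt_17_general (n d r : ℕ) [NeZero n]
    {Alphabet : Type*} [DecidableEq Alphabet]
    (w : Fin r → Alphabet) (hw : Function.Injective w)
    (L : (Fin d → ZMod n) → Alphabet) :
    (r - 1) * (Finset.univ.filter
        (fun p : (Fin d → ZMod n) × (Fin d → ZMod n) =>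
          (∀ j, p.2 j = 0 ∨ p.2 j = 1 ∨ p.2 j = -1) ∧ p.2 ≠ 0 ∧
          ∀ i : Fin r, L (p.1 + (i : ℕ) • p.2) = w i)).card
    ≤ (Finset.univ.filter
        (fun p : (Fin d → ZMod n) × (Fin d → ZMod n) =>
          (∀ j, p.2 j = 0 ∨ p.2 j = 1 ∨ p.2 j = -1) ∧ p.2 ≠ 0 ∧
          (∃ i : Fin r, (i : ℕ) % 2 = 0 ∧ L p.1 = w i) ∧
          (∃ i : Fin r, (i : ℕ) % 2 = 1 ∧ L (p.1 + p.2) = w i))).card := by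
  simpa only [and_assoc] using card_mul_card_occurrences_le
    (fun v => (∀ j, v j = 0 ∨ v j = 1 ∨ v j = -1) ∧ v ≠ 0) (fun _ => unitDirection_neg) w hw L

/-- Counting lemma: `(r-1) · #(w) ≤ #(𝒪ℰ)`, where `#(𝒪ℰ)` counts ordered adjacent
pairs whose first label is a letter of `w` at an odd position and whose second label
is a letter of `w` at an even position (positions are 1-indexed, so `i : Fin r`
corresponds to position `i+1`, odd when `i.val` is even). -/
theorem stmt_17 (n d r : ℕ) [NeZero n] (hr : 2 ≤ r) (hn : r ≤ n)
    {Alphabet : Type*} [DecidableEq Alphabet]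
    (w : Fin r → Alphabet) (hw : Function.Injective w)
    (L : (Fin d → ZMod n) → Alphabet) :
    (r - 1) * (Finset.univ.filter
        (fun p : (Fin d → ZMod n) × (Fin d → ZMod n) =>
          (∀ j, p.2 j = 0 ∨ p.2 j = 1 ∨ p.2 j = -1) ∧ p.2 ≠ 0 ∧
          ∀ i : Fin r, L (p.1 + (i : ℕ) • p.2) = w i)).card
    ≤ (Finset.univ.filter
        (fun p : (Fin d → ZMod n) × (Fin d → ZMod n) =>
          (∀ j, p.2 j = 0 ∨ p.2 j = 1 ∨ p.2 j = -1) ∧ p.2 ≠ 0 ∧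
          (∃ i : Fin r, (i : ℕ) % 2 = 0 ∧ L p.1 = w i) ∧
          (∃ i : Fin r, (i : ℕ) % 2 = 1 ∧ L (p.1 + p.2) = w i))).card :=
  stmt_17_general n d r w hw L
end
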